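/- arXiv:1407.3880 — 11 statements merged into one kernel-verified Lean document; each statement's English description precedes it below -/
import Mathlib

section
/- For every integer n ≥ 3 and every integer a with 2 ≤ a ≤ n−1, one has p_n(a−1)·p_n(a+1) ≥ p_n(a)²; that is, the sequence {p_n(a)}_{1 ≤ a ≤ n} of clade probabilities under the YHK model is log-convex. -/
/-- Number of rooted binary phylogenetic trees on `m` leaves:
`phi m = (2m-2)! / (2^(m-1) * (m-1)!)` (so `phi m = (2m-3)!!` for `m ≥ 2`, `phi 1 = 1`). -/
noncomputable def phi (m : ℕ) : ℝ :=
  (Nat.factorial (2 * m - 2) : ℝ) / ((2 : ℝ) ^ (m - 1) * (Nat.factorial (m - 1) : ℝ))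

/-- Clade probability of a fixed subset of size `a` among `n` leaves under the YHK model:
`p_n(a) = (2n/(a(a+1))) * C(n,a)⁻¹` for `a < n`, and `p_n(n) = 1`. -/
noncomputable def pYHK (n a : ℕ) : ℝ :=
  if a = n then 1 else (2 * (n : ℝ) / ((a : ℝ) * ((a : ℝ) + 1))) * ((n.choose a : ℝ))⁻¹

/-- Clade probability under the PDA model:
`q_n(a) = C(n-1,a-1) * C(2n-2,2a-2)⁻¹` for `a < n`, and `q_n(n) = 1`. -/
noncomputable def qPDA (n a : ℕ) : ℝ :=
  if a = n then 1
  else (((n - 1).choose (a - 1) : ℝ)) * ((((2 * n - 2).choose (2 * a - 2)) : ℝ))⁻¹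

/-- `p_n(a, n-a) = (2/(n-1)) * C(n,a)⁻¹`: the YHK probability that both a fixed subset of
size `a` and its complement are clades. -/
noncomputable def pPair (n a : ℕ) : ℝ :=
  (2 / ((n : ℝ) - 1)) * ((n.choose a : ℝ))⁻¹

/-- `q_n(a, n-a) = (1/(2n-2a-1)) * C(n-1,a-1) * C(2n-2,2a-2)⁻¹`: the PDA probability that
both a fixed subset of size `a` and its complement are clades. -/
noncomputable def qPair (n a : ℕ) : ℝ :=
  (1 / (2 * (n : ℝ) - 2 * (a : ℝ) - 1)) * (((n - 1).choose (a - 1) : ℝ)) *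
    ((((2 * n - 2).choose (2 * a - 2)) : ℝ))⁻¹

/-- Clan probability of a fixed subset of size `a` under the YHK model:
`p*_n(a) = 2n * [1/(a(a+1)) + 1/((n-a)(n-a+1)) - 1/(n(n-1))] * C(n,a)⁻¹`. -/
noncomputable def pStar (n a : ℕ) : ℝ :=
  2 * (n : ℝ) *
    (1 / ((a : ℝ) * ((a : ℝ) + 1)) + 1 / (((n : ℝ) - (a : ℝ)) * ((n : ℝ) - (a : ℝ) + 1)) -
      1 / ((n : ℝ) * ((n : ℝ) - 1))) * ((n.choose a : ℝ))⁻¹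

/-- Clan probability of a fixed subset of size `a` under the PDA model:
`q*_n(a) = phi(a) * phi(n-a) / phi(n-1)`. -/
noncomputable def qStar (n a : ℕ) : ℝ := phi a * phi (n - a) / phi (n - 1)

/-- `u_n(a) = a(a+1)/(n(n-1)) - 1/(2n-2a-1)`: difference of the conditional probabilities
(YHK minus PDA) that both a clade `A` of size `a` and its complement are clades, given `A`
is a clade. -/
noncomputable def uDiff (n a : ℕ) : ℝ :=
  (a : ℝ) * ((a : ℝ) + 1) / ((n : ℝ) * ((n : ℝ) - 1)) - 1 / (2 * (n : ℝ) - 2 * (a : ℝ) - 1)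


lemma aux_logconvex (x y z A N : ℝ) (hx : 0 < x) (hy : 0 < y) (hz : 0 < z)
    (hA : 2 ≤ A) (hN : A + 2 ≤ N)
    (h1 : z * (A + 1) = y * (N - A)) (h2 : y * A = x * (N - A + 1)) :
    (2 * N / ((A - 1) * (A - 1 + 1)) * x⁻¹) * (2 * N / ((A + 1) * (A + 1 + 1)) * z⁻¹) ≥
      (2 * N / (A * (A + 1)) * y⁻¹) ^ 2 := by
  have e3 : x * z * ((A+1) * (N-A+1)) = y^2 * (A * (N-A)) := by
    linear_combination (x * (N - A + 1)) * h1 - (y * (N - A)) * h2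
  have h4 : (A-1) * (A+2) * (N-A) ≤ (A+1)^2 * (N-A+1) := by
    nlinarith [mul_nonneg (show (0:ℝ) ≤ A+3 by linarith) (show (0:ℝ) ≤ N-A by linarith),
      sq_nonneg (A+1)]
  have h5 : A^2*(A+1)*y^2*((A-1)*(A+2)*(N-A)) ≤ A^2*(A+1)*y^2*((A+1)^2*(N-A+1)) := by
    apply mul_le_mul_of_nonneg_left h4; positivity
  have e4 : (A-1)*A*(A+1)*(A+2)*(x*z)*((A+1)*(N-A+1))
      = (A-1)*A*(A+1)*(A+2)*(y^2*(A*(N-A))) := by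
    linear_combination ((A-1)*A*(A+1)*(A+2)) * e3
  have hpos : (0:ℝ) < (A+1)*(N-A+1) := by nlinarith
  have key : (A-1) * A * (A+1) * (A+2) * (x*z) ≤ (A*(A+1))^2 * y^2 := by
    rw [← mul_le_mul_iff_of_pos_right hpos]
    nlinarith [e4, h5]
  have hd1 : (0:ℝ) < (A-1) * A * (A+1) * (A+2) * (x*z) :=
    mul_pos (mul_pos (mul_pos (mul_pos (by linarith) (by linarith)) (by linarith))
      (by linarith)) (mul_pos hx hz)
  have hn1 : A - 1 ≠ 0 := by intro h; nlinarith
  have hn2 : A ≠ 0 := by intro h; nlinarith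
  have hn3 : A + 1 ≠ 0 := by intro h; nlinarith
  have hn4 : A + 2 ≠ 0 := by intro h; nlinarith
  have eL : (2 * N / ((A-1) * (A - 1 + 1)) * x⁻¹) * (2 * N / ((A+1) * (A + 1 + 1)) * z⁻¹)
      = 4 * N^2 / ((A-1) * A * (A+1) * (A+2) * (x*z)) := by
    field_simp [hx.ne', hz.ne', hn1, hn2, hn3, hn4]
    ring
  have eR : (2 * N / (A * (A + 1)) * y⁻¹)^2 = 4 * N^2 / ((A*(A+1))^2 * y^2) := by
    field_simp [hy.ne', hn2, hn3]
    ring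
  rw [ge_iff_le, eL, eR]
  exact div_le_div_of_nonneg_left (by positivity) hd1 key

lemma aux_logconvex2 (x y A : ℝ) (hx : 0 < x) (hy : 0 < y) (hA : 2 ≤ A)
    (hy1 : y = A + 1) (hyx : y * A = x * 2) :
    (2 * (A+1) / ((A - 1) * (A - 1 + 1)) * x⁻¹) * 1 ≥
      (2 * (A+1) / (A * (A + 1)) * y⁻¹) ^ 2 := by
  have hxv : x = (A+1)*A/2 := by rw [hy1] at hyx; linarith
  subst hy1 hxv
  have hn1 : A - 1 ≠ 0 := by intro h; nlinarith
  have hn2 : A ≠ 0 := by intro h; nlinarith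
  have hn3 : A + 1 ≠ 0 := by intro h; nlinarith
  rw [ge_iff_le, mul_one]
  have eL : 2 * (A+1) / ((A - 1) * (A - 1 + 1)) * ((A+1)*A/2)⁻¹
      = 4 / ((A-1) * A^2) := by
    field_simp [hn1, hn2, hn3]
    ring
  have eR : (2 * (A+1) / (A * (A + 1)) * (A+1)⁻¹) ^ 2 = 4 / (A^2 * (A+1)^2) := by
    field_simp [hn2, hn3]
    ring
  rw [eL, eR]
  have hd1 : (0:ℝ) < (A-1) * A^2 := by nlinarith
  exact div_le_div_of_nonneg_left (by norm_num) hd1 (by nlinarith)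


/-- log-convexity of the clade probabilities `p_n(a)` under the YHK model. -/
theorem yhk_clade_log_convex (n a : ℕ) (hn : 3 ≤ n) (ha : 2 ≤ a) (han : a ≤ n - 1) :
    pYHK n (a - 1) * pYHK n (a + 1) ≥ (pYHK n a) ^ 2 := by
  have hane : a ≠ n := by omega
  have ham1 : a - 1 ≠ n := by omega
  have haln : a ≤ n := by omega
  have hc1 : (((a - 1 : ℕ)) : ℝ) = (a:ℝ) - 1 := by
    have : (1:ℕ) ≤ a := by omega
    push_cast [Nat.cast_sub this]; ring
  by_cases hcase : a + 1 = n
  · -- boundary case a = n - 1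
    have hEnd : pYHK n (a+1) = 1 := by rw [pYHK, if_pos hcase]
    rw [hEnd, pYHK, pYHK, if_neg ham1, if_neg hane, hc1]
    have hN : (n:ℝ) = (a:ℝ) + 1 := by exact_mod_cast hcase.symm
    rw [hN]
    have hx : (0:ℝ) < (n.choose (a-1) : ℝ) := by
      exact_mod_cast Nat.choose_pos (show a - 1 ≤ n by omega)
    have hy : (0:ℝ) < (n.choose a : ℝ) := by exact_mod_cast Nat.choose_pos haln
    have hA : (2:ℝ) ≤ (a:ℝ) := by exact_mod_cast ha
    have hy1 : ((n.choose a : ℝ)) = (a:ℝ) + 1 := by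
      have : n.choose a = n := by
        rw [← hcase]; exact Nat.choose_succ_self_right a
      rw [this, hN]
    have hyx : ((n.choose a : ℝ)) * (a:ℝ) = ((n.choose (a-1) : ℝ)) * 2 := by
      have e : a - 1 + 1 = a := by omega
      have h := congrArg (fun k : ℕ => (k : ℝ)) (Nat.choose_succ_right_eq n (a-1))
      rw [e, show n - (a-1) = 2 by omega] at h
      push_cast at h
      linarith [h]
    exact aux_logconvex2 _ _ _ hx hy hA hy1 hyx
  · -- main case a + 1 < n
    have hap1 : a + 1 ≠ n := hcase
    rw [pYHK, pYHK, pYHK, if_neg ham1, if_neg hap1, if_neg hane, hc1]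
    have hc2 : (((a + 1 : ℕ)) : ℝ) = (a:ℝ) + 1 := by push_cast; ring
    rw [hc2]
    have hx : (0:ℝ) < (n.choose (a-1) : ℝ) := by
      exact_mod_cast Nat.choose_pos (show a - 1 ≤ n by omega)
    have hy : (0:ℝ) < (n.choose a : ℝ) := by exact_mod_cast Nat.choose_pos haln
    have hz : (0:ℝ) < (n.choose (a+1) : ℝ) := by
      exact_mod_cast Nat.choose_pos (show a + 1 ≤ n by omega)
    have hA : (2:ℝ) ≤ (a:ℝ) := by exact_mod_cast ha
    have hN : (a:ℝ) + 2 ≤ (n:ℝ) := by exact_mod_cast (show a + 2 ≤ n by omega)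
    have h1 : ((n.choose (a+1) : ℝ)) * ((a:ℝ) + 1)
        = ((n.choose a : ℝ)) * ((n:ℝ) - (a:ℝ)) := by
      have h := congrArg (fun k : ℕ => (k : ℝ)) (Nat.choose_succ_right_eq n a)
      push_cast [Nat.cast_sub haln] at h
      linarith [h]
    have h2 : ((n.choose a : ℝ)) * (a:ℝ)
        = ((n.choose (a-1) : ℝ)) * ((n:ℝ) - (a:ℝ) + 1) := by
      have e : a - 1 + 1 = a := by omega
      have h := congrArg (fun k : ℕ => (k : ℝ)) (Nat.choose_succ_right_eq n (a-1))
      rw [e, show n - (a-1) = n - a + 1 by omega] at h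
      push_cast [Nat.cast_sub haln] at h
      linarith [h]
    exact aux_logconvex _ _ _ _ _ hx hy hz hA hN h1 h2
end

section
/- Let Δ(n) = √(n + ((n−3)/4)²) + (n−3)/4. For every integer n ≥ 3 and every integer a with 1 ≤ a ≤ n−2: if a ≤ Δ(n) then p_n(a) ≥ p_n(a+1), and if a > Δ(n) then p_n(a) < p_n(a+1). -/
set_option maxHeartbeats 1000000 in
/-- monotonicity pattern of `p_n(a)` around the critical value
`Δ(n) = √(n + ((n-3)/4)²) + (n-3)/4`. -/
theorem yhk_clade_unimodal (n a : ℕ) (hn : 3 ≤ n) (ha : 1 ≤ a) (han : a ≤ n - 2) :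
    ((a : ℝ) ≤ Real.sqrt ((n : ℝ) + (((n : ℝ) - 3) / 4) ^ 2) + ((n : ℝ) - 3) / 4 →
      pYHK n a ≥ pYHK n (a + 1)) ∧
    (Real.sqrt ((n : ℝ) + (((n : ℝ) - 3) / 4) ^ 2) + ((n : ℝ) - 3) / 4 < (a : ℝ) →
      pYHK n a < pYHK n (a + 1)) := by
  have hn2 : 2 ≤ n := by omega
  have haN : a + 2 ≤ n := by omega
  set N : ℝ := (n : ℝ) with hN
  set A : ℝ := (a : ℝ) with hA
  have hNA : A + 2 ≤ N := by
    have : ((a + 2 : ℕ) : ℝ) ≤ (n : ℝ) := by exact_mod_cast haN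
    push_cast at this; linarith
  have hN3 : (3 : ℝ) ≤ N := by rw [hN]; exact_mod_cast hn
  have hA1 : (1 : ℝ) ≤ A := by rw [hA]; exact_mod_cast ha
  set c0 : ℝ := (N - 3) / 4 with hc0
  set s : ℝ := Real.sqrt (N + c0 ^ 2) with hs
  have hs0 : 0 ≤ s := Real.sqrt_nonneg _
  have hssq : s ^ 2 = N + c0 ^ 2 := Real.sq_sqrt (by nlinarith)
  -- key iff
  have hiff : A ≤ s + c0 ↔ 2 * A ^ 2 - (N - 3) * A - 2 * N ≤ 0 := by
    constructor
    · intro h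
      rcases le_or_gt (A - c0) 0 with h0 | h0
      · nlinarith
      · nlinarith [sq_nonneg (A - c0), sq_nonneg s]
    · intro h
      have h1 : (A - c0) ^ 2 ≤ N + c0 ^ 2 := by nlinarith
      have h2 : A - c0 ≤ s := by
        calc A - c0 ≤ |A - c0| := le_abs_self _
        _ = Real.sqrt ((A - c0) ^ 2) := (Real.sqrt_sq_eq_abs _).symm
        _ ≤ s := Real.sqrt_le_sqrt h1
      linarith
  -- rewrite pYHK values
  have hane : a ≠ n := by omega
  have ha1ne : a + 1 ≠ n := by omega
  have hc : (0 : ℝ) < (n.choose a : ℝ) := by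
    exact_mod_cast Nat.choose_pos (by omega : a ≤ n)
  have hc1 : (0 : ℝ) < (n.choose (a + 1) : ℝ) := by
    exact_mod_cast Nat.choose_pos (by omega : a + 1 ≤ n)
  have key : (n.choose (a + 1) : ℝ) * (A + 1) = (n.choose a : ℝ) * (N - A) := by
    have := Nat.choose_succ_right_eq n a
    have h2 : ((n.choose (a + 1) * (a + 1) : ℕ) : ℝ) = ((n.choose a * (n - a) : ℕ) : ℝ) := by
      exact_mod_cast congrArg (Nat.cast : ℕ → ℝ) this
    push_cast [Nat.cast_sub (by omega : a ≤ n)] at h2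
    linarith [h2]
  have hp1 : pYHK n a = 2 * N / (A * (A + 1)) * (n.choose a : ℝ)⁻¹ := by
    rw [pYHK, if_neg hane]
  have hp2 : pYHK n (a + 1) = 2 * N / ((A + 2) * (N - A)) * (n.choose a : ℝ)⁻¹ := by
    rw [pYHK, if_neg ha1ne]
    push_cast
    have h1 : A + 1 ≠ 0 := by positivity
    have h2 : A + 2 ≠ 0 := by positivity
    have h3 : N - A ≠ 0 := by intro h; nlinarith
    field_simp
    rw [← hN, ← hA]
    linear_combination (-(A + 2) * N) * key
  have hx : (0 : ℝ) < A * (A + 1) := by nlinarith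
  have hy : (0 : ℝ) < (A + 2) * (N - A) := by nlinarith
  have hK : (0 : ℝ) < 2 * N * (n.choose a : ℝ)⁻¹ := by positivity
  have hform : ∀ x : ℝ, 2 * N / x * (n.choose a : ℝ)⁻¹ = (2 * N * (n.choose a : ℝ)⁻¹) / x := by
    intro x; ring
  clear_value s c0 A N
  rw [hp1, hp2, hform, hform]
  constructor
  · intro h
    have hf := hiff.mp h
    have : A * (A + 1) ≤ (A + 2) * (N - A) := by nlinarith
    exact (div_le_div_iff_of_pos_left hK hy hx).mpr this
  · intro h
    have hf : ¬ (2 * A ^ 2 - (N - 3) * A - 2 * N ≤ 0) := fun hh => absurd (hiff.mpr hh) (not_le.mpr h)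
    push_neg at hf
    have : (A + 2) * (N - A) < A * (A + 1) := by nlinarith
    exact (div_lt_div_iff_of_pos_left hK hx hy).mpr this
end

section
/- For every integer n ≥ 3 and every integer a with 1 ≤ a ≤ n−2: if 2a ≥ n then q_n(a+1) ≥ q_n(a), and if 2a ≤ n then q_n(a+1) ≤ q_n(a). -/
lemma key_mult_aux (b c : ℕ) :
    (b+c+2).choose (b+1) * (2*b+2*c+4).choose (2*b) * (2*c+3) * ((b+1)*(2*b+1)*(2*b+2)) =
    (b+c+2).choose b * (2*b+2*c+4).choose (2*b+2) * (2*b+1) * ((b+1)*(2*b+1)*(2*b+2)) := by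
  have h1 := Nat.choose_succ_right_eq (b+c+2) b
  have h2 := Nat.choose_succ_right_eq (2*b+2*c+4) (2*b)
  have h3 := Nat.choose_succ_right_eq (2*b+2*c+4) (2*b+1)
  have e1 : b+c+2-b = c+2 := by omega
  have e2 : 2*b+2*c+4-2*b = 2*c+4 := by omega
  have e3 : 2*b+2*c+4-(2*b+1) = 2*c+3 := by omega
  rw [e1] at h1; rw [e2] at h2; rw [e3] at h3
  have h3' : (2*b+2*c+4).choose (2*b+2) * (2*b+2) = (2*b+2*c+4).choose (2*b+1) * (2*c+3) := by
    have e : 2*b+1+1 = 2*b+2 := by omega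
    rw [e] at h3; exact h3
  set A := (b+c+2).choose b
  set B := (b+c+2).choose (b+1)
  set C2 := (2*b+2*c+4).choose (2*b)
  set D := (2*b+2*c+4).choose (2*b+2)
  set E := (2*b+2*c+4).choose (2*b+1)
  calc B * C2 * (2*c+3) * ((b+1)*(2*b+1)*(2*b+2))
      = (B*(b+1)) * (C2*((2*c+3)*(2*b+1)*(2*b+2))) := by ring
    _ = (A*(c+2)) * (C2*((2*c+3)*(2*b+1)*(2*b+2))) := by rw [h1]
    _ = (C2*(2*c+4)) * (A*((2*c+3)*(2*b+1)*(b+1))) := by ring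
    _ = (E*(2*b+1)) * (A*((2*c+3)*(2*b+1)*(b+1))) := by rw [← h2]
    _ = (E*(2*c+3)) * (A*((2*b+1)*(2*b+1)*(b+1))) := by ring
    _ = (D*(2*b+2)) * (A*((2*b+1)*(2*b+1)*(b+1))) := by rw [← h3']
    _ = A * D * (2*b+1) * ((b+1)*(2*b+1)*(2*b+2)) := by ring

lemma key_aux (b c : ℕ) :
    (b+c+2).choose (b+1) * (2*b+2*c+4).choose (2*b) * (2*c+3) =
    (b+c+2).choose b * (2*b+2*c+4).choose (2*b+2) * (2*b+1) :=
  Nat.eq_of_mul_eq_mul_right (by positivity) (key_mult_aux b c)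

/-- monotonicity pattern of `q_n(a)` with turning point at `2a = n`. -/
theorem pda_clade_unimodal (n a : ℕ) (hn : 3 ≤ n) (ha : 1 ≤ a) (han : a ≤ n - 2) :
    (n ≤ 2 * a → qPDA n (a + 1) ≥ qPDA n a) ∧
    (2 * a ≤ n → qPDA n (a + 1) ≤ qPDA n a) := by
  obtain ⟨b, c, rfl, rfl⟩ : ∃ b c, a = b + 1 ∧ n = b + c + 3 :=
    ⟨a - 1, n - a - 2, by omega, by omega⟩
  have hne1 : b + 1 + 1 ≠ b + c + 3 := by omega
  have hne2 : b + 1 ≠ b + c + 3 := by omega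
  have ea : (b+1) - 1 = b := rfl
  have eq1 : (b+c+3) - 1 = b+c+2 := by omega
  have eq2 : 2*(b+c+3) - 2 = 2*b+2*c+4 := by omega
  have eq4 : 2*(b+1) - 2 = 2*b := by omega
  have eq3 : 2*(b+1+1) - 2 = 2*b+2 := by omega
  have eq5 : (b+1+1) - 1 = b+1 := rfl
  rw [qPDA, qPDA, if_neg hne1, if_neg hne2, ea, eq1, eq2, eq3, eq4, eq5]
  have hC2 : (0:ℝ) < ((2*b+2*c+4).choose (2*b) : ℝ) := by
    exact_mod_cast Nat.choose_pos (by omega)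
  have hD : (0:ℝ) < ((2*b+2*c+4).choose (2*b+2) : ℝ) := by
    exact_mod_cast Nat.choose_pos (by omega)
  have hkey := key_aux b c
  constructor
  · intro h
    have hnat : (b+c+2).choose b * (2*b+2*c+4).choose (2*b+2) ≤
        (b+c+2).choose (b+1) * (2*b+2*c+4).choose (2*b) := by
      have hbc : 2*c+3 ≤ 2*b+1 := by omega
      have h2 : (b+c+2).choose b * (2*b+2*c+4).choose (2*b+2) * (2*c+3) ≤
          (b+c+2).choose (b+1) * (2*b+2*c+4).choose (2*b) * (2*c+3) := by
        calc (b+c+2).choose b * (2*b+2*c+4).choose (2*b+2) * (2*c+3)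
            ≤ (b+c+2).choose b * (2*b+2*c+4).choose (2*b+2) * (2*b+1) :=
              Nat.mul_le_mul_left _ hbc
          _ = _ := hkey.symm
      exact Nat.le_of_mul_le_mul_right h2 (by omega)
    rw [ge_iff_le, ← div_eq_mul_inv, ← div_eq_mul_inv, div_le_div_iff₀ hC2 hD]
    exact_mod_cast hnat
  · intro h
    have hnat : (b+c+2).choose (b+1) * (2*b+2*c+4).choose (2*b) ≤
        (b+c+2).choose b * (2*b+2*c+4).choose (2*b+2) := by
      have hbc : 2*b+1 ≤ 2*c+3 := by omega
      have h2 : (b+c+2).choose (b+1) * (2*b+2*c+4).choose (2*b) * (2*b+1) ≤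
          (b+c+2).choose b * (2*b+2*c+4).choose (2*b+2) * (2*b+1) := by
        calc (b+c+2).choose (b+1) * (2*b+2*c+4).choose (2*b) * (2*b+1)
            ≤ (b+c+2).choose (b+1) * (2*b+2*c+4).choose (2*b) * (2*c+3) :=
              Nat.mul_le_mul_left _ hbc
          _ = _ := hkey
      exact Nat.le_of_mul_le_mul_right h2 (by omega)
    rw [← div_eq_mul_inv, ← div_eq_mul_inv, div_le_div_iff₀ hD hC2]
    exact_mod_cast hnat
end

section
/- For every integer n ≥ 3 and every integer a with 2 ≤ a ≤ n−1, one has q_n(a−1)·q_n(a+1) ≥ q_n(a)²; that is, the sequence {q_n(a)}_{1 ≤ a ≤ n} of clade probabilities under the PDA model is log-convex. -/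
lemma pda_key (b c : ℕ) :
    (((b+c+2).choose (b+1) : ℝ))^2 * (((2*b+2*c+4).choose (2*b) : ℝ)) *
      (((2*b+2*c+4).choose (2*b+4) : ℝ))
    ≤ (((b+c+2).choose b : ℝ)) * (((b+c+2).choose (b+2) : ℝ)) *
      (((2*b+2*c+4).choose (2*b+2) : ℝ))^2 := by
  -- choose ratio identities
  have nA1 := Nat.choose_succ_right_eq (b+c+2) b
  have nA2 := Nat.choose_succ_right_eq (b+c+2) (b+1)
  have nD1 := Nat.choose_succ_right_eq (2*b+2*c+4) (2*b)
  have nD2 := Nat.choose_succ_right_eq (2*b+2*c+4) (2*b+1)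
  have nD3 := Nat.choose_succ_right_eq (2*b+2*c+4) (2*b+2)
  have nD4 := Nat.choose_succ_right_eq (2*b+2*c+4) (2*b+3)
  simp only [show b+c+2-b = c+2 by omega, show b+c+2-(b+1) = c+1 by omega,
    show b+1+1 = b+2 by omega,
    show 2*b+2*c+4-2*b = 2*c+4 by omega, show 2*b+1+1 = 2*b+2 by omega,
    show 2*b+2*c+4-(2*b+1) = 2*c+3 by omega, show 2*b+2+1 = 2*b+3 by omega,
    show 2*b+2*c+4-(2*b+2) = 2*c+2 by omega, show 2*b+3+1 = 2*b+4 by omega,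
    show 2*b+2*c+4-(2*b+3) = 2*c+1 by omega] at nA1 nA2 nD1 nD2 nD3 nD4
  have hA1 : ((b+c+2).choose (b+1) : ℝ) * ((b:ℝ)+1) = ((b+c+2).choose b : ℝ) * ((c:ℝ)+2) := by
    exact_mod_cast nA1
  have hA2 : ((b+c+2).choose (b+2) : ℝ) * ((b:ℝ)+2) = ((b+c+2).choose (b+1) : ℝ) * ((c:ℝ)+1) := by
    exact_mod_cast nA2
  have hD1 : ((2*b+2*c+4).choose (2*b+1) : ℝ) * (2*(b:ℝ)+1) = ((2*b+2*c+4).choose (2*b) : ℝ) * (2*(c:ℝ)+4) := by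
    exact_mod_cast nD1
  have hD2 : ((2*b+2*c+4).choose (2*b+2) : ℝ) * (2*(b:ℝ)+2) = ((2*b+2*c+4).choose (2*b+1) : ℝ) * (2*(c:ℝ)+3) := by
    exact_mod_cast nD2
  have hD3 : ((2*b+2*c+4).choose (2*b+3) : ℝ) * (2*(b:ℝ)+3) = ((2*b+2*c+4).choose (2*b+2) : ℝ) * (2*(c:ℝ)+2) := by
    exact_mod_cast nD3
  have hD4 : ((2*b+2*c+4).choose (2*b+4) : ℝ) * (2*(b:ℝ)+4) = ((2*b+2*c+4).choose (2*b+3) : ℝ) * (2*(c:ℝ)+1) := by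
    exact_mod_cast nD4
  set A1 : ℝ := ((b+c+2).choose b : ℝ)
  set A2 : ℝ := ((b+c+2).choose (b+1) : ℝ)
  set A3 : ℝ := ((b+c+2).choose (b+2) : ℝ)
  set D0 : ℝ := ((2*b+2*c+4).choose (2*b) : ℝ)
  set D1 : ℝ := ((2*b+2*c+4).choose (2*b+1) : ℝ)
  set D2 : ℝ := ((2*b+2*c+4).choose (2*b+2) : ℝ)
  set D3 : ℝ := ((2*b+2*c+4).choose (2*b+3) : ℝ)
  set D4 : ℝ := ((2*b+2*c+4).choose (2*b+4) : ℝ)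
  set x : ℝ := (b:ℝ)
  set y : ℝ := (c:ℝ)
  have hx : 0 ≤ x := Nat.cast_nonneg b
  have hy : 0 ≤ y := Nat.cast_nonneg c
  have h1 : A1 * A3 * ((y+2)*(x+2)) = A2^2 * ((x+1)*(y+1)) := by
    linear_combination (A2*(x+1))*hA2 - (A3*(x+2))*hA1
  have h2 : D0 * ((2*y+3)*(2*y+4)) = D2 * ((2*x+1)*(2*x+2)) := by
    linear_combination (-(2*y+3))*hD1 - (2*x+1)*hD2
  have h3 : D4 * ((2*x+3)*(2*x+4)) = D2 * ((2*y+1)*(2*y+2)) := by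
    linear_combination (2*x+3)*hD4 + (2*y+1)*hD3
  have hQ : (0:ℝ) < (y+2)*(x+2)*((2*y+3)*(2*y+4)*((2*x+3)*(2*x+4))) := by positivity
  have key : A2^2 * D0 * D4 * ((y+2)*(x+2)*((2*y+3)*(2*y+4)*((2*x+3)*(2*x+4))))
      ≤ A1 * A3 * D2^2 * ((y+2)*(x+2)*((2*y+3)*(2*y+4)*((2*x+3)*(2*x+4)))) := by
    have e1 : A1 * A3 * D2^2 * ((y+2)*(x+2)*((2*y+3)*(2*y+4)*((2*x+3)*(2*x+4))))
        = (A2^2*D2^2) * ((x+1)*(y+1)*((2*y+3)*(2*y+4)*((2*x+3)*(2*x+4)))) := by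
      linear_combination (D2^2*((2*y+3)*(2*y+4)*((2*x+3)*(2*x+4)))) * h1
    have e2 : A2^2 * D0 * D4 * ((y+2)*(x+2)*((2*y+3)*(2*y+4)*((2*x+3)*(2*x+4))))
        = (A2^2*D2^2) * ((y+2)*(x+2)*((2*x+1)*(2*x+2)*((2*y+1)*(2*y+2)))) := by
      linear_combination (A2^2*(y+2)*(x+2)*(D4*((2*x+3)*(2*x+4)))) * h2
        + (A2^2*(y+2)*(x+2)*(D2*((2*x+1)*(2*x+2)))) * h3
    rw [e1, e2]
    have hW : (y+2)*(x+2)*((2*x+1)*(2*x+2)*((2*y+1)*(2*y+2)))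
        ≤ (x+1)*(y+1)*((2*y+3)*(2*y+4)*((2*x+3)*(2*x+4))) := by
      have hid : (x+1)*(y+1)*((2*y+3)*(2*y+4)*((2*x+3)*(2*x+4)))
          = (y+2)*(x+2)*((2*x+1)*(2*x+2)*((2*y+1)*(2*y+2)))
            + 4*(x+1)*(x+2)*(y+1)*(y+2)*(4*x+4*y+8) := by ring
      have hpos : (0:ℝ) ≤ 4*(x+1)*(x+2)*(y+1)*(y+2)*(4*x+4*y+8) := by positivity
      linarith
    have hnn : (0:ℝ) ≤ A2^2*D2^2 := by positivity
    exact mul_le_mul_of_nonneg_left hW hnn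
  exact le_of_mul_le_mul_right key hQ


/-- log-convexity of the clade probabilities `q_n(a)` under the PDA model. -/
theorem pda_clade_log_convex (n a : ℕ) (hn : 3 ≤ n) (ha : 2 ≤ a) (han : a ≤ n - 1) :
    qPDA n (a - 1) * qPDA n (a + 1) ≥ (qPDA n a) ^ 2 := by
  obtain ⟨b, rfl⟩ : ∃ b, a = b + 2 := ⟨a - 2, by omega⟩
  obtain ⟨c, rfl⟩ : ∃ c, n = b + c + 3 := ⟨n - b - 3, by omega⟩
  have q1 : qPDA (b+c+3) (b+2-1)
      = ((b+c+2).choose b : ℝ) * (((2*b+2*c+4).choose (2*b) : ℝ))⁻¹ := by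
    rw [qPDA, if_neg (by omega)]
    rw [show b+c+3-1 = b+c+2 by omega, show b+2-1-1 = b by omega,
      show 2*(b+c+3)-2 = 2*b+2*c+4 by omega, show 2*(b+2-1)-2 = 2*b by omega]
  have q2 : qPDA (b+c+3) (b+2)
      = ((b+c+2).choose (b+1) : ℝ) * (((2*b+2*c+4).choose (2*b+2) : ℝ))⁻¹ := by
    rw [qPDA, if_neg (by omega)]
    rw [show b+c+3-1 = b+c+2 by omega, show b+2-1 = b+1 by omega,
      show 2*(b+c+3)-2 = 2*b+2*c+4 by omega, show 2*(b+2)-2 = 2*b+2 by omega]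
  have q3 : qPDA (b+c+3) (b+2+1)
      = ((b+c+2).choose (b+2) : ℝ) * (((2*b+2*c+4).choose (2*b+4) : ℝ))⁻¹ := by
    by_cases h : b+2+1 = b+c+3
    · have hc : c = 0 := by omega
      subst hc
      rw [qPDA, if_pos h, show b+0+2 = b+2 by omega, show 2*b+2*0+4 = 2*b+4 by omega,
        Nat.choose_self, Nat.choose_self]
      norm_num
    · rw [qPDA, if_neg h]
      rw [show b+c+3-1 = b+c+2 by omega, show b+2+1-1 = b+2 by omega,
        show 2*(b+c+3)-2 = 2*b+2*c+4 by omega, show 2*(b+2+1)-2 = 2*b+4 by omega]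
  rw [q1, q2, q3, ge_iff_le]
  have hD0 : (0:ℝ) < ((2*b+2*c+4).choose (2*b) : ℝ) := by
    exact_mod_cast Nat.choose_pos (by omega)
  have hD2 : (0:ℝ) < ((2*b+2*c+4).choose (2*b+2) : ℝ) := by
    exact_mod_cast Nat.choose_pos (by omega)
  have hD4 : (0:ℝ) < ((2*b+2*c+4).choose (2*b+4) : ℝ) := by
    exact_mod_cast Nat.choose_pos (by omega)
  rw [show (((b+c+2).choose (b+1) : ℝ) * (((2*b+2*c+4).choose (2*b+2) : ℝ))⁻¹)^2
      = (((b+c+2).choose (b+1) : ℝ))^2 / (((2*b+2*c+4).choose (2*b+2) : ℝ))^2 by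
        field_simp,
    show ((b+c+2).choose b : ℝ) * (((2*b+2*c+4).choose (2*b) : ℝ))⁻¹
        * (((b+c+2).choose (b+2) : ℝ) * (((2*b+2*c+4).choose (2*b+4) : ℝ))⁻¹)
      = (((b+c+2).choose b : ℝ) * ((b+c+2).choose (b+2) : ℝ))
        / (((2*b+2*c+4).choose (2*b) : ℝ) * ((2*b+2*c+4).choose (2*b+4) : ℝ)) by
        field_simp]
  rw [div_le_div_iff₀ (by positivity) (by positivity)]
  nlinarith [pda_key b c]
end

section
/- For every integer n ≥ 3: (i) for every integer a with 1 ≤ a ≤ n−2, if 2a ≥ n−1 then q_n(a+1, n−a−1) ≥ q_n(a, n−a), and if 2a ≤ n−1 then q_n(a+1, n−a−1) ≤ q_n(a, n−a); (ii) for every integer a with 2 ≤ a ≤ n−2, q_n(a−1, n−a+1)·q_n(a+1, n−a−1) ≥ q_n(a, n−a)², i.e. the sequence {q_n(a, n−a)}_{1 ≤ a ≤ n−1} is log-convex. -/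
lemma qPair_pos (b k : ℕ) : 0 < qPair (b + k + 3) (b + 1) := by
  unfold qPair
  have e1 : b + k + 3 - 1 = b + k + 2 := by omega
  have e2 : b + 1 - 1 = b := by omega
  have e3 : 2 * (b + k + 3) - 2 = 2 * b + 2 * k + 4 := by omega
  have e4 : 2 * (b + 1) - 2 = 2 * b := by omega
  rw [e1, e2, e3, e4]
  have h1 : (0:ℝ) < ((b + k + 2).choose b : ℝ) := by
    exact_mod_cast Nat.choose_pos (by omega)
  have h2 : (0:ℝ) < ((2 * b + 2 * k + 4).choose (2 * b) : ℝ) := by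
    exact_mod_cast Nat.choose_pos (by omega)
  have h3 : (0:ℝ) < 2 * ((b:ℝ) + k + 3) - 2 * ((b:ℝ) + 1) - 1 := by push_cast; ring_nf; positivity
  push_cast at *
  positivity

lemma qPair_rec (b k : ℕ) :
    qPair (b + k + 3) (b + 2) * (2 * (k : ℝ) + 1) =
    qPair (b + k + 3) (b + 1) * (2 * (b : ℝ) + 1) := by
  unfold qPair
  have e1 : b + k + 3 - 1 = b + k + 2 := by omega
  have e2 : b + 2 - 1 = b + 1 := by omega
  have e2' : b + 1 - 1 = b := by omega
  have e3 : 2 * (b + k + 3) - 2 = 2 * b + 2 * k + 4 := by omega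
  have e4 : 2 * (b + 2) - 2 = 2 * b + 2 := by omega
  have e4' : 2 * (b + 1) - 2 = 2 * b := by omega
  rw [e1, e2, e2', e3, e4, e4']
  rw [Nat.cast_choose ℝ (show b + 1 ≤ b + k + 2 by omega),
      Nat.cast_choose ℝ (show b ≤ b + k + 2 by omega),
      Nat.cast_choose ℝ (show 2 * b + 2 ≤ 2 * b + 2 * k + 4 by omega),
      Nat.cast_choose ℝ (show 2 * b ≤ 2 * b + 2 * k + 4 by omega)]
  have s1 : b + k + 2 - (b + 1) = k + 1 := by omega
  have s2 : b + k + 2 - b = k + 2 := by omega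
  have s3 : 2 * b + 2 * k + 4 - (2 * b + 2) = 2 * k + 2 := by omega
  have s4 : 2 * b + 2 * k + 4 - 2 * b = 2 * k + 4 := by omega
  rw [s1, s2, s3, s4]
  have f1 : ((b+1).factorial : ℝ) = (b + 1) * b.factorial := by
    push_cast [Nat.factorial_succ]; ring
  have f2 : ((k+2).factorial : ℝ) = (k + 2) * (k+1).factorial := by
    push_cast [Nat.factorial_succ]; ring
  have f3 : ((2*b+2).factorial : ℝ) = (2*b+2) * (2*b+1) * (2*b).factorial := by
    have : 2*b+2 = (2*b+1) + 1 := by omega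
    rw [this, Nat.factorial_succ, Nat.factorial_succ]; push_cast; ring
  have f4 : ((2*k+4).factorial : ℝ) = (2*k+4) * (2*k+3) * (2*k+2).factorial := by
    have : 2*k+4 = (2*k+3) + 1 := by omega
    rw [this, Nat.factorial_succ, Nat.factorial_succ]; push_cast; ring
  rw [f1, f2, f3, f4]
  have p0 : ((b.factorial : ℝ)) ≠ 0 := by positivity
  have p1 : (((k+1).factorial : ℝ)) ≠ 0 := by positivity
  have p2 : (((2*b).factorial : ℝ)) ≠ 0 := by positivity
  have p3 : (((2*k+2).factorial : ℝ)) ≠ 0 := by positivity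
  have p4 : (((b+k+2).factorial : ℝ)) ≠ 0 := by positivity
  have p5 : (((2*b+2*k+4).factorial : ℝ)) ≠ 0 := by positivity
  have c1 : 2 * ((b:ℝ) + k + 3) - 2 * ((b:ℝ) + 2) - 1 = 2*k + 1 := by push_cast; ring
  have c2 : 2 * ((b:ℝ) + k + 3) - 2 * ((b:ℝ) + 1) - 1 = 2*k + 3 := by push_cast; ring
  push_cast
  push_cast at c1 c2
  rw [c1, c2]
  have d1 : (2*(k:ℝ)+1) ≠ 0 := by positivity
  have d2 : (2*(k:ℝ)+3) ≠ 0 := by positivity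
  field_simp
  ring

/-- monotonicity pattern (turning point at `2a = n-1`) and log-convexity of
`q_n(a, n-a)` under the PDA model. -/
theorem pda_pair_unimodal_log_convex (n : ℕ) (hn : 3 ≤ n) :
    (∀ a : ℕ, 1 ≤ a → a ≤ n - 2 →
      (n - 1 ≤ 2 * a → qPair n (a + 1) ≥ qPair n a) ∧
      (2 * a ≤ n - 1 → qPair n (a + 1) ≤ qPair n a)) ∧
    (∀ a : ℕ, 2 ≤ a → a ≤ n - 2 →
      qPair n (a - 1) * qPair n (a + 1) ≥ (qPair n a) ^ 2) := by
  constructor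
  · intro a ha1 ha2
    obtain ⟨b, rfl⟩ : ∃ b, a = b + 1 := ⟨a - 1, by omega⟩
    obtain ⟨k, rfl⟩ : ∃ k, n = b + k + 3 := ⟨n - b - 3, by omega⟩
    have hrec := qPair_rec b k
    have hpos := qPair_pos b k
    constructor
    · intro h
      have hkb : (k : ℝ) ≤ (b : ℝ) := by exact_mod_cast (by omega : k ≤ b)
      show qPair (b + k + 3) (b + 2) ≥ qPair (b + k + 3) (b + 1)
      nlinarith [hrec, hpos, hkb]
    · intro h
      have hkb : (b : ℝ) ≤ (k : ℝ) := by exact_mod_cast (by omega : b ≤ k)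
      show qPair (b + k + 3) (b + 2) ≤ qPair (b + k + 3) (b + 1)
      nlinarith [hrec, hpos, hkb]
  · intro a ha1 ha2
    obtain ⟨b, rfl⟩ : ∃ b, a = b + 2 := ⟨a - 2, by omega⟩
    obtain ⟨k, rfl⟩ : ∃ k, n = b + k + 4 := ⟨n - b - 4, by omega⟩
    have hrec1 := qPair_rec b (k + 1)
    rw [show b + (k + 1) + 3 = b + k + 4 from by omega] at hrec1
    have hrec2 := qPair_rec (b + 1) k
    rw [show b + 1 + k + 3 = b + k + 4 from by omega] at hrec2
    have hpos1 := qPair_pos b (k + 1)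
    rw [show b + (k + 1) + 3 = b + k + 4 from by omega] at hpos1
    have hpos2 := qPair_pos (b + 1) k
    rw [show b + 1 + k + 3 = b + k + 4 from by omega] at hpos2
    push_cast at hrec1 hrec2
    -- hrec1 : q(b+2) * (2k+3) = q(b+1) * (2b+1)
    -- hrec2 : q(b+3) * (2k+1) = q(b+2) * (2b+3)
    have e : b + 2 - 1 = b + 1 := by omega
    rw [e]
    show qPair (b+k+4) (b+1) * qPair (b+k+4) (b+2+1) ≥ qPair (b+k+4) (b+2) ^ 2
    have h3 : qPair (b+k+4) (b+1+2) * (2*(k:ℝ)+1) = qPair (b+k+4) (b+1+1) * (2*(b:ℝ)+3) := by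
      convert hrec2 using 2 <;> push_cast <;> ring
    have hq3pos : 0 < qPair (b+k+4) (b+2+1) := by
      have := hpos2
      nlinarith [h3]
    nlinarith [hrec1, hrec2, hpos1, hpos2, hq3pos, mul_pos hpos1 hpos2,
      mul_pos hpos2 hq3pos, sq_nonneg (qPair (b+k+4) (b+2))]
end

section
/- For every integer n > 3 there exists a real number κ(n) with 2 ≤ κ(n) ≤ n−1 such that for every integer a: if 2 ≤ a and a < κ(n) then p_n(a) > q_n(a), and if κ(n) < a and a ≤ n−1 then p_n(a) < q_n(a). -/
lemma choose_cast_pos {m k : ℕ} (h : k ≤ m) : (0:ℝ) < (m.choose k : ℝ) := by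
  exact_mod_cast Nat.choose_pos h

lemma algL (c1 c2 c3 A N : ℝ) (hc1 : c1 ≠ 0) (hc3 : c3 ≠ 0) (h1 : A + 1 ≠ 0)
    (h2 : A + 2 ≠ 0) (hNA : N - A ≠ 0) :
    (2 * N / ((A+1) * ((A+1) + 1))) * (c1 * (N - A) / (A+1))⁻¹ * (c2 * c3⁻¹)
      = (2 * N * c2 / (c1 * c3)) * (1 / ((A+2) * (N-A))) := by
  have h2' : A + 1 + 1 = A + 2 := by ring
  rw [h2']
  field_simp

lemma algR (c1 c2 c3 A N : ℝ) (hc1 : c1 ≠ 0) (hc3 : c3 ≠ 0) (h0 : A ≠ 0)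
    (h1 : A + 1 ≠ 0) (h3 : 2*A - 1 ≠ 0) (hNA : N - A ≠ 0) (hNA1 : 2*N - 2*A - 1 ≠ 0) :
    (2 * N / (A * (A + 1))) * c1⁻¹
      * (c2 * (N - A) / A * (c3 * (2*N - 2*A) * (2*N - 2*A - 1) / ((2*A) * (2*A-1)))⁻¹)
      = (2 * N * c2 / (c1 * c3)) * ((2*A-1) / (A * (A+1) * (2*N-2*A-1))) := by
  have hNA2 : 2*N - 2*A ≠ 0 := by intro h; apply hNA; linarith
  field_simp

lemma cross_step {n a : ℕ} (hn : 3 < n) (ha : 2 ≤ a) (hb : a + 2 ≤ n) :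
    pYHK n (a+1) * qPDA n a < pYHK n a * qPDA n (a+1) := by
  have han : a ≠ n := by omega
  have han1 : a + 1 ≠ n := by omega
  rw [pYHK, qPDA, pYHK, qPDA, if_neg han, if_neg han1, if_neg han, if_neg han1]
  have e1 : a + 1 - 1 = a := by omega
  have e2 : 2 * (a+1) - 2 = 2*a := by omega
  rw [e1, e2]
  have hA2 : (2:ℝ) ≤ (a:ℝ) := by exact_mod_cast ha
  have hNA : (a:ℝ) + 2 ≤ (n:ℝ) := by exact_mod_cast hb
  -- choose identities over ℝ
  have hr1 : ((n.choose (a+1)) : ℝ) * ((a:ℝ)+1) = (n.choose a : ℝ) * ((n:ℝ) - (a:ℝ)) := by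
    have h := Nat.choose_succ_right_eq n a
    have h2 : ((n.choose (a+1) * (a+1) : ℕ) : ℝ) = ((n.choose a * (n-a) : ℕ) : ℝ) := by
      exact_mod_cast h
    push_cast [Nat.cast_sub (show a ≤ n by omega)] at h2
    linarith [h2]
  have hr2 : (((n-1).choose a) : ℝ) * (a:ℝ) = ((n-1).choose (a-1) : ℝ) * ((n:ℝ) - (a:ℝ)) := by
    have h := Nat.choose_succ_right_eq (n-1) (a-1)
    rw [show a - 1 + 1 = a by omega, show n - 1 - (a-1) = n - a by omega] at h
    have h2 : (((n-1).choose a * a : ℕ) : ℝ) = (((n-1).choose (a-1) * (n-a) : ℕ) : ℝ) := by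
      exact_mod_cast h
    push_cast [Nat.cast_sub (show a ≤ n by omega)] at h2
    linarith [h2]
  have hr3 : (((2*n-2).choose (2*a)) : ℝ) * (2*(a:ℝ)) * (2*(a:ℝ)-1)
      = ((2*n-2).choose (2*a-2) : ℝ) * (2*(n:ℝ) - 2*(a:ℝ)) * (2*(n:ℝ) - 2*(a:ℝ) - 1) := by
    have h1 := Nat.choose_succ_right_eq (2*n-2) (2*a-2)
    rw [show 2*a - 2 + 1 = 2*a - 1 by omega, show 2*n-2 - (2*a-2) = 2*n - 2*a by omega] at h1
    have h2 := Nat.choose_succ_right_eq (2*n-2) (2*a-1)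
    rw [show 2*a - 1 + 1 = 2*a by omega, show 2*n-2 - (2*a-1) = 2*n - 2*a - 1 by omega] at h2
    have key : (2*n-2).choose (2*a) * (2*a) * (2*a-1)
        = (2*n-2).choose (2*a-2) * (2*n - 2*a) * (2*n - 2*a - 1) := by
      calc (2*n-2).choose (2*a) * (2*a) * (2*a-1)
          = (2*n-2).choose (2*a-1) * (2*n - 2*a - 1) * (2*a-1) := by rw [h2]
        _ = (2*n-2).choose (2*a-1) * (2*a-1) * (2*n - 2*a - 1) := by ring
        _ = (2*n-2).choose (2*a-2) * (2*n - 2*a) * (2*n - 2*a - 1) := by rw [h1]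
    have h3 : (((2*n-2).choose (2*a) * (2*a) * (2*a-1) : ℕ) : ℝ)
        = (((2*n-2).choose (2*a-2) * (2*n - 2*a) * (2*n - 2*a - 1) : ℕ) : ℝ) := by
      exact_mod_cast key
    push_cast [Nat.cast_sub (show 2*a ≤ 2*n by omega), Nat.cast_sub (show 1 ≤ 2*a by omega),
      Nat.cast_sub (show 1 ≤ 2*n - 2*a by omega)] at h3
    linarith [h3]
  -- positivity facts
  have hc1 : (0:ℝ) < (n.choose a : ℝ) := choose_cast_pos (by omega)
  have hc2 : (0:ℝ) < ((n-1).choose (a-1) : ℝ) := choose_cast_pos (by omega)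
  have hc3 : (0:ℝ) < ((2*n-2).choose (2*a-2) : ℝ) := choose_cast_pos (by omega)
  have hx1 : ((n.choose (a+1)) : ℝ) = (n.choose a : ℝ) * ((n:ℝ) - (a:ℝ)) / ((a:ℝ)+1) := by
    rw [eq_div_iff (by linarith)]; exact hr1
  have hx2 : (((n-1).choose a) : ℝ) = ((n-1).choose (a-1) : ℝ) * ((n:ℝ) - (a:ℝ)) / (a:ℝ) := by
    rw [eq_div_iff (by linarith)]; exact hr2
  have hx3 : (((2*n-2).choose (2*a)) : ℝ)
      = ((2*n-2).choose (2*a-2) : ℝ) * (2*(n:ℝ) - 2*(a:ℝ)) * (2*(n:ℝ) - 2*(a:ℝ) - 1)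
        / ((2*(a:ℝ)) * (2*(a:ℝ)-1)) := by
    rw [eq_div_iff (by nlinarith)]
    linarith [hr3]
  push_cast
  rw [hx1, hx2, hx3]
  set c1 : ℝ := (n.choose a : ℝ) with hc1e
  set c2 : ℝ := ((n-1).choose (a-1) : ℝ) with hc2e
  set c3 : ℝ := ((2*n-2).choose (2*a-2) : ℝ) with hc3e
  set A : ℝ := (a:ℝ) with hAe
  set N : ℝ := (n:ℝ) with hNe
  have hne : ((a:ℝ)) ≠ 0 := by linarith
  have hne1 : ((a:ℝ)+1) ≠ 0 := by linarith
  have hne2 : ((a:ℝ)+2) ≠ 0 := by linarith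
  have hneNA : ((n:ℝ)-(a:ℝ)) ≠ 0 := by linarith
  have hne2a1 : (2*(a:ℝ)-1) ≠ 0 := by linarith
  have hne2na : (2*(n:ℝ)-2*(a:ℝ)-1) ≠ 0 := by linarith
  have hc1' : (n.choose a : ℝ) ≠ 0 := ne_of_gt hc1
  have hc3' : ((2*n-2).choose (2*a-2) : ℝ) ≠ 0 := ne_of_gt hc3
  clear hr1 hr2 hr3 hx1 hx2 hx3
  rw [algL c1 c2 c3 A N hc1' hc3' hne1 hne2 hneNA,
      algR c1 c2 c3 A N hc1' hc3' hne hne1 hne2a1 hneNA hne2na]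
  have hcpos : (0:ℝ) < 2 * N * c2 / (c1 * c3) := by positivity
  apply mul_lt_mul_of_pos_left _ hcpos
  have hApos : (0:ℝ) < A := by linarith
  have h2na : (0:ℝ) < 2*N - 2*A - 1 := by linarith
  rw [div_lt_div_iff₀ (mul_pos (by linarith) (by linarith : (0:ℝ) < N - A)) (mul_pos (mul_pos hApos (by linarith)) h2na)]
  nlinarith [mul_nonneg (show (0:ℝ) ≤ N by linarith) (show (0:ℝ) ≤ A - 2 by linarith)]

lemma qPDA_pos {n a : ℕ} (h1 : 1 ≤ a) (h2 : a ≤ n - 1) : 0 < qPDA n a := by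
  have han : a ≠ n := by omega
  rw [qPDA, if_neg han]
  have h3 : (0:ℝ) < ((n-1).choose (a-1) : ℝ) := choose_cast_pos (by omega)
  have h4 : (0:ℝ) < ((2*n-2).choose (2*a-2) : ℝ) := choose_cast_pos (by omega)
  positivity

noncomputable def rr (n a : ℕ) : ℝ := pYHK n a / qPDA n a

lemma rr_step {n a : ℕ} (hn : 3 < n) (ha : 2 ≤ a) (hb : a + 2 ≤ n) :
    rr n (a+1) < rr n a := by
  rw [rr, rr, div_lt_div_iff₀ (qPDA_pos (by omega) (by omega)) (qPDA_pos (by omega) (by omega))]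
  exact cross_step hn ha hb

lemma rr_mono {n : ℕ} (hn : 3 < n) : ∀ b a : ℕ, 2 ≤ a → a < b → b ≤ n - 1 →
    rr n b < rr n a := by
  intro b
  induction b with
  | zero => intro a _ h _; omega
  | succ k ih =>
    intro a ha hab hb
    rcases Nat.lt_or_ge a k with h | h
    · exact lt_trans (rr_step hn (by omega) (by omega)) (ih a ha h (by omega))
    · have : a = k := by omega
      subst this
      exact rr_step hn ha (by omega)

lemma rr_two {n : ℕ} (hn : 3 < n) : 1 < rr n 2 := by
  have hq : 0 < qPDA n 2 := qPDA_pos (by omega) (by omega)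
  rw [rr, lt_div_iff₀ hq, one_mul]
  have h2n : (2:ℕ) ≠ n := by omega
  rw [pYHK, qPDA, if_neg h2n, if_neg h2n]
  have hN : (4:ℝ) ≤ (n:ℝ) := by exact_mod_cast hn
  have hch2 : (n.choose 2 : ℝ) = (n:ℝ) * ((n:ℝ)-1) / 2 := Nat.cast_choose_two ℝ n
  have hch1 : (((n-1).choose (2-1) : ℕ) : ℝ) = (n:ℝ) - 1 := by
    rw [show (2:ℕ)-1 = 1 by rfl, Nat.choose_one_right]
    push_cast [Nat.cast_sub (show 1 ≤ n by omega)]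
    ring
  have hch3 : (((2*n-2).choose (2*2-2) : ℕ) : ℝ) = (2*(n:ℝ)-2) * (2*(n:ℝ)-3) / 2 := by
    rw [show 2*2-2 = 2 by rfl, Nat.cast_choose_two]
    push_cast [Nat.cast_sub (show 2 ≤ 2*n by omega)]
    ring
  rw [hch1, hch2, hch3]
  push_cast
  have h1 : (2*(n:ℝ)-2) ≠ 0 := by linarith
  have h2 : (2*(n:ℝ)-3) ≠ 0 := by linarith
  have h3 : ((n:ℝ)) ≠ 0 := by linarith
  have h4 : ((n:ℝ)-1) ≠ 0 := by linarith
  have eq1 : ((n:ℝ)-1) * ((2*(n:ℝ)-2) * (2*(n:ℝ)-3) / 2)⁻¹ = 1/(2*(n:ℝ)-3) := by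
    rw [show (2*(n:ℝ)-2) * (2*(n:ℝ)-3) / 2 = ((n:ℝ)-1)*(2*(n:ℝ)-3) by ring, mul_inv,
      ← mul_assoc, mul_inv_cancel₀ h4, one_mul, one_div]
  have eq2 : 2*(n:ℝ)/((2:ℝ)*((2:ℝ)+1)) * ((n:ℝ)*((n:ℝ)-1)/2)⁻¹ = 2/(3*((n:ℝ)-1)) := by
    field_simp
    ring
  rw [eq1, eq2, div_lt_div_iff₀ (by linarith) (by linarith)]
  nlinarith

lemma rr_top {n : ℕ} (hn : 3 < n) : rr n (n-1) < 1 := by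
  have hq : 0 < qPDA n (n-1) := qPDA_pos (by omega) (by omega)
  rw [rr, div_lt_one hq]
  have h2n : n - 1 ≠ n := by omega
  rw [pYHK, qPDA, if_neg h2n, if_neg h2n]
  have hN : (4:ℝ) ≤ (n:ℝ) := by exact_mod_cast hn
  have hcA : ((n.choose (n-1) : ℕ) : ℝ) = (n:ℝ) := by
    rw [show n.choose (n-1) = n.choose (n-1) from rfl]
    have := Nat.choose_symm (show 1 ≤ n by omega)
    rw [this, Nat.choose_one_right]
  have hcB : (((n-1).choose (n-1-1) : ℕ) : ℝ) = (n:ℝ) - 1 := by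
    have := Nat.choose_symm (show 1 ≤ n - 1 by omega)
    rw [this, Nat.choose_one_right]
    push_cast [Nat.cast_sub (show 1 ≤ n by omega)]
    ring
  have hcC : (((2*n-2).choose (2*(n-1)-2) : ℕ) : ℝ) = (2*(n:ℝ)-2) * (2*(n:ℝ)-3) / 2 := by
    rw [show 2*(n-1)-2 = (2*n-2) - 2 by omega]
    rw [Nat.choose_symm (show 2 ≤ 2*n-2 by omega), Nat.cast_choose_two ℝ]
    push_cast [Nat.cast_sub (show 2 ≤ 2*n by omega)]
    ring
  rw [hcA, hcB, hcC]
  have hna : ((n-1 : ℕ) : ℝ) = (n:ℝ) - 1 := by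
    push_cast [Nat.cast_sub (show 1 ≤ n by omega)]; ring
  rw [hna]
  have h1 : (2*(n:ℝ)-2) ≠ 0 := by linarith
  have h2 : (2*(n:ℝ)-3) ≠ 0 := by linarith
  have h3 : ((n:ℝ)) ≠ 0 := by linarith
  have h4 : ((n:ℝ)-1) ≠ 0 := by linarith
  have eq1 : ((n:ℝ)-1) * ((2*(n:ℝ)-2) * (2*(n:ℝ)-3) / 2)⁻¹ = 1/(2*(n:ℝ)-3) := by
    rw [show (2*(n:ℝ)-2) * (2*(n:ℝ)-3) / 2 = ((n:ℝ)-1)*(2*(n:ℝ)-3) by ring, mul_inv,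
      ← mul_assoc, mul_inv_cancel₀ h4, one_mul, one_div]
  have eq2 : 2*(n:ℝ)/(((n:ℝ)-1)*(((n:ℝ)-1)+1)) * ((n:ℝ))⁻¹ = 2/((n:ℝ)*((n:ℝ)-1)) := by
    rw [sub_add_cancel]
    field_simp
  rw [eq1, eq2, div_lt_div_iff₀ (by nlinarith) (by linarith)]
  nlinarith

/-- existence of a critical value `κ(n)` separating where `p_n(a) > q_n(a)`
from where `p_n(a) < q_n(a)`. -/
theorem yhk_pda_clade_comparison (n : ℕ) (hn : 3 < n) :
    ∃ κ : ℝ, 2 ≤ κ ∧ κ ≤ (n : ℝ) - 1 ∧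
      ∀ a : ℕ,
        (2 ≤ a → (a : ℝ) < κ → pYHK n a > qPDA n a) ∧
        (κ < (a : ℝ) → a ≤ n - 1 → pYHK n a < qPDA n a) := by
  classical
  set S : Finset ℕ := (Finset.Icc 2 (n-1)).filter (fun a => 1 < rr n a) with hS
  have h2S : 2 ∈ S := by
    rw [hS, Finset.mem_filter, Finset.mem_Icc]
    exact ⟨⟨le_refl 2, by omega⟩, rr_two hn⟩
  have hne : S.Nonempty := ⟨2, h2S⟩
  set m := S.max' hne with hm
  have hmS : m ∈ S := S.max'_mem hne
  rw [hS, Finset.mem_filter, Finset.mem_Icc] at hmS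
  obtain ⟨⟨hm2, hmn⟩, hmr⟩ := hmS
  have hmtop : m ≠ n - 1 := by
    intro h
    rw [h] at hmr
    exact absurd (lt_trans hmr (rr_top hn)) (lt_irrefl 1)
  have hm1n : m + 1 ≤ n - 1 := by omega
  have hnotS : rr n (m+1) ≤ 1 := by
    by_contra h
    push_neg at h
    have : m + 1 ∈ S := by
      rw [hS, Finset.mem_filter, Finset.mem_Icc]
      exact ⟨⟨by omega, hm1n⟩, h⟩
    have := S.le_max' (m+1) this
    omega
  -- generic facts
  have hcast : ((m:ℝ) + 1) ≤ (n:ℝ) - 1 := by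
    have : ((m+1 : ℕ) : ℝ) ≤ ((n-1 : ℕ) : ℝ) := by exact_mod_cast hm1n
    push_cast [Nat.cast_sub (show 1 ≤ n by omega)] at this
    linarith
  have hm2R : (2:ℝ) ≤ (m:ℝ) := by exact_mod_cast hm2
  have hgt : ∀ a : ℕ, 2 ≤ a → a ≤ m → pYHK n a > qPDA n a := by
    intro a ha ham
    have hq : 0 < qPDA n a := qPDA_pos (by omega) (by omega)
    have hr : 1 < rr n a := by
      rcases Nat.eq_or_lt_of_le ham with h | h
      · rwa [h]
      · exact lt_trans hmr (rr_mono hn m a ha h (by omega))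
    rw [rr, lt_div_iff₀ hq, one_mul] at hr
    exact hr
  have hlt : ∀ a : ℕ, 2 ≤ a → a ≤ n - 1 → rr n a < 1 → pYHK n a < qPDA n a := by
    intro a ha han hr
    have hq : 0 < qPDA n a := qPDA_pos (by omega) (by omega)
    rwa [rr, div_lt_one hq] at hr
  rcases lt_or_eq_of_le hnotS with hlt1 | heq1
  · -- rr n (m+1) < 1 : take κ = m + 1/2
    refine ⟨(m:ℝ) + 1/2, by linarith, by linarith, fun a => ⟨?_, ?_⟩⟩
    · intro ha2 haκ
      have : (a:ℝ) < ((m+1 : ℕ) : ℝ) := by push_cast; linarith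
      have ham : a ≤ m := by exact_mod_cast Nat.lt_succ_iff.mp (by exact_mod_cast this)
      exact hgt a ha2 ham
    · intro haκ han
      have : ((m : ℕ) : ℝ) < (a:ℝ) := by linarith
      have ham : m + 1 ≤ a := by
        have : m < a := by exact_mod_cast this
        omega
      rcases Nat.eq_or_lt_of_le ham with h | h
      · exact hlt a (by omega) han (h ▸ hlt1)
      · exact hlt a (by omega) han
          (lt_trans (rr_mono hn a (m+1) (by omega) h (by omega)) hlt1)
  · -- rr n (m+1) = 1 : take κ = m + 1
    refine ⟨(m:ℝ) + 1, by linarith, hcast, fun a => ⟨?_, ?_⟩⟩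
    · intro ha2 haκ
      have : (a:ℝ) < ((m+1 : ℕ) : ℝ) := by push_cast; linarith
      have ham : a ≤ m := by exact_mod_cast Nat.lt_succ_iff.mp (by exact_mod_cast this)
      exact hgt a ha2 ham
    · intro haκ han
      have : ((m+1 : ℕ) : ℝ) < (a:ℝ) := by push_cast; linarith
      have ham : m + 1 < a := by exact_mod_cast this
      exact hlt a (by omega) han
        (lt_of_lt_of_le (rr_mono hn a (m+1) (by omega) ham (by omega)) (le_of_eq heq1))
end

section
/- For every integer n > 3 the ratio p_n(a)/q_n(a) is strictly decreasing in a on the integers 2 ≤ a ≤ n−1; equivalently, for every integer a with 2 ≤ a ≤ n−2, p_n(a+1)·q_n(a) < p_n(a)·q_n(a+1). -/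
set_option maxHeartbeats 1000000 in
/-- the ratio `p_n(a)/q_n(a)` is strictly decreasing for `2 ≤ a ≤ n-1`,
i.e. `p_n(a+1) q_n(a) < p_n(a) q_n(a+1)` for `2 ≤ a ≤ n-2`. -/
theorem yhk_pda_ratio_strict_anti (n a : ℕ) (hn : 3 < n) (ha : 2 ≤ a) (han : a ≤ n - 2) :
    pYHK n (a + 1) * qPDA n a < pYHK n a * qPDA n (a + 1) := by
  obtain ⟨b, hb⟩ : ∃ b, a = b + 2 := ⟨a - 2, by omega⟩
  obtain ⟨k, hk, rfl⟩ : ∃ k, 2 ≤ k ∧ n = a + k := ⟨n - a, by omega, by omega⟩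
  have hne1 : a + 1 ≠ a + k := by omega
  have hne2 : a ≠ a + k := by omega
  rw [pYHK, pYHK, qPDA, qPDA, if_neg hne1, if_neg hne2, if_neg hne2, if_neg hne1]
  have hr1 : (a + 1) - 1 = a := by omega
  have hr2 : 2 * (a + 1) - 2 = 2 * b + 4 := by omega
  have hr3 : a + k - 1 = b + k + 1 := by omega
  have hr4 : a - 1 = b + 1 := by omega
  have hr5 : 2 * (a + k) - 2 = 2 * b + 2 * k + 2 := by omega
  have hr6 : 2 * a - 2 = 2 * b + 2 := by omega
  rw [hr1, hr2, hr3, hr4, hr5, hr6]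
  -- choose identities (nat)
  have H1 : (a + k).choose (a + 1) * (a + 1) = (a + k).choose a * k := by
    simpa using Nat.choose_succ_right_eq (a + k) a
  have H2 : (b + k + 1).choose a * a = (b + k + 1).choose (b + 1) * k := by
    have := Nat.choose_succ_right_eq (b + k + 1) (b + 1)
    have e1 : b + 1 + 1 = a := by omega
    have e2 : b + k + 1 - (b + 1) = k := by omega
    rw [e1, e2] at this; exact this
  have H3 : (2*b + 2*k + 2).choose (2*b + 4) * (2*b + 4)
      = (2*b + 2*k + 2).choose (2*b + 3) * (2*k - 1) := by
    have := Nat.choose_succ_right_eq (2*b + 2*k + 2) (2*b + 3)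
    have e : 2*b + 2*k + 2 - (2*b + 3) = 2*k - 1 := by omega
    rw [e] at this; exact this
  have H4 : (2*b + 2*k + 2).choose (2*b + 3) * (2*b + 3)
      = (2*b + 2*k + 2).choose (2*b + 2) * (2*k) := by
    have := Nat.choose_succ_right_eq (2*b + 2*k + 2) (2*b + 2)
    have e : 2*b + 2*k + 2 - (2*b + 2) = 2*k := by omega
    rw [e] at this; exact this
  -- cast to ℝ
  have hk1 : (1:ℕ) ≤ 2 * k := by omega
  have R1 : ((a + k).choose (a + 1) : ℝ) * ((a:ℝ) + 1) = ((a + k).choose a : ℝ) * (k:ℝ) := by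
    exact_mod_cast congrArg (Nat.cast : ℕ → ℝ) H1
  have R2 : ((b + k + 1).choose a : ℝ) * (a:ℝ) = ((b + k + 1).choose (b + 1) : ℝ) * (k:ℝ) := by
    exact_mod_cast congrArg (Nat.cast : ℕ → ℝ) H2
  have R3 : ((2*b + 2*k + 2).choose (2*b + 4) : ℝ) * (2*(b:ℝ) + 4)
      = ((2*b + 2*k + 2).choose (2*b + 3) : ℝ) * (2*(k:ℝ) - 1) := by
    have := congrArg (Nat.cast : ℕ → ℝ) H3
    push_cast [Nat.cast_sub hk1] at this
    linarith [this]
  have R4 : ((2*b + 2*k + 2).choose (2*b + 3) : ℝ) * (2*(b:ℝ) + 3)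
      = ((2*b + 2*k + 2).choose (2*b + 2) : ℝ) * (2*(k:ℝ)) := by
    have := congrArg (Nat.cast : ℕ → ℝ) H4
    push_cast at this
    linarith [this]
  have Pc0 : (0:ℝ) < ((a + k).choose a : ℝ) := by
    exact_mod_cast Nat.choose_pos (show a ≤ a + k by omega)
  have Pc1 : (0:ℝ) < ((a + k).choose (a + 1) : ℝ) := by
    exact_mod_cast Nat.choose_pos (show a + 1 ≤ a + k by omega)
  have Pd0 : (0:ℝ) < ((b + k + 1).choose (b + 1) : ℝ) := by
    exact_mod_cast Nat.choose_pos (show b + 1 ≤ b + k + 1 by omega)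
  have Pd1 : (0:ℝ) < ((b + k + 1).choose a : ℝ) := by
    exact_mod_cast Nat.choose_pos (show a ≤ b + k + 1 by omega)
  have Pe0 : (0:ℝ) < ((2*b + 2*k + 2).choose (2*b + 2) : ℝ) := by
    exact_mod_cast Nat.choose_pos (show 2*b + 2 ≤ 2*b + 2*k + 2 by omega)
  have Pem : (0:ℝ) < ((2*b + 2*k + 2).choose (2*b + 3) : ℝ) := by
    exact_mod_cast Nat.choose_pos (show 2*b + 3 ≤ 2*b + 2*k + 2 by omega)
  have Pe2 : (0:ℝ) < ((2*b + 2*k + 2).choose (2*b + 4) : ℝ) := by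
    exact_mod_cast Nat.choose_pos (show 2*b + 4 ≤ 2*b + 2*k + 2 by omega)
  have hcastn : ((a + k : ℕ) : ℝ) = (a:ℝ) + (k:ℝ) := by push_cast; ring
  have hcasta1 : ((a + 1 : ℕ) : ℝ) = (a:ℝ) + 1 := by push_cast; ring
  have hA2 : (2:ℝ) ≤ (a:ℝ) := by exact_mod_cast (show 2 ≤ a by omega)
  have hK2 : (2:ℝ) ≤ (k:ℝ) := by exact_mod_cast (show 2 ≤ k by omega)
  rw [hcastn, hcasta1]
  set A : ℝ := (a : ℝ)
  set K : ℝ := (k : ℝ)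
  set c0 : ℝ := ((a + k).choose a : ℝ)
  set c1 : ℝ := ((a + k).choose (a + 1) : ℝ)
  set d0 : ℝ := ((b + k + 1).choose (b + 1) : ℝ)
  set d1 : ℝ := ((b + k + 1).choose a : ℝ)
  set e0 : ℝ := ((2*b + 2*k + 2).choose (2*b + 2) : ℝ)
  set em : ℝ := ((2*b + 2*k + 2).choose (2*b + 3) : ℝ)
  set e2 : ℝ := ((2*b + 2*k + 2).choose (2*b + 4) : ℝ)
  have hB : (b:ℝ) = A - 2 := by
    have h : ((a:ℕ):ℝ) = ((b + 2 : ℕ):ℝ) := by rw [hb]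
    push_cast at h
    simp only [show A = (a:ℝ) from rfl]
    linarith
  rw [hB] at R3 R4
  have hApos : (0:ℝ) < A := by linarith
  have hKpos : (0:ℝ) < K := by linarith
  have hA1 : A + 1 ≠ 0 := by positivity
  have hA0 : A ≠ 0 := ne_of_gt hApos
  have h2A1 : 2*A - 1 ≠ 0 := by nlinarith
  have h2K1 : 2*K - 1 ≠ 0 := by nlinarith
  have hc0 : c0 ≠ 0 := ne_of_gt Pc0
  have hc1 : c1 ≠ 0 := ne_of_gt Pc1
  have he0 : e0 ≠ 0 := ne_of_gt Pe0
  have he2 : e2 ≠ 0 := ne_of_gt Pe2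
  have R3' : e2 * (2*A) = em * (2*K - 1) := by linarith [R3]
  have R4' : em * (2*A - 1) = e0 * (2*K) := by linarith [R4]
  have R34 : e2 * (2*A) * (2*A - 1) = e0 * (2*K) * (2*K - 1) := by
    nlinarith [R3', R4']
  have hc1v : c1 = c0 * K / (A + 1) := by
    field_simp; linarith [R1]
  have hd1v : d1 = d0 * K / A := by
    field_simp; linarith [R2]
  have he2v : e2 = e0 * (2*K) * (2*K - 1) / ((2*A) * (2*A - 1)) := by
    rw [eq_div_iff (mul_ne_zero (by linarith) h2A1)]
    linear_combination R34
  have hL : 2 * (A + K) / ((A + 1) * ((A + 1) + 1)) * c1⁻¹ * (d0 * e0⁻¹)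
      = (2 * (A + K) * d0 / (c0 * e0)) * (1 / ((A + 2) * K)) := by
    rw [hc1v]
    field_simp
    ring
  have hR : 2 * (A + K) / (A * (A + 1)) * c0⁻¹ * (d1 * e2⁻¹)
      = (2 * (A + K) * d0 / (c0 * e0)) * ((2*A - 1) / (A * (A + 1) * (2*K - 1))) := by
    rw [hd1v, he2v]
    field_simp
  rw [hL, hR]
  have hT : (0:ℝ) < 2 * (A + K) * d0 / (c0 * e0) := by positivity
  have hfrac : 1 / ((A + 2) * K) < (2*A - 1) / (A * (A + 1) * (2*K - 1)) := by
    have p1 : (0:ℝ) < (A + 2) * K := by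
      apply mul_pos <;> linarith
    have p2 : (0:ℝ) < A * (A + 1) * (2*K - 1) := by
      apply mul_pos
      · apply mul_pos <;> linarith
      · linarith
    rw [div_lt_div_iff₀ p1 p2]
    nlinarith [mul_nonneg (by linarith : (0:ℝ) ≤ K) (by linarith : (0:ℝ) ≤ A - 2)]
  exact mul_lt_mul_of_pos_left hfrac hT
end

section
/- For every integer n ≥ 3 there exists a real number τ(n) with 1 ≤ τ(n) ≤ n−1 such that for every integer a with 1 ≤ a ≤ n−1: if a ≤ τ(n) then u_n(a) ≤ 0, and if a ≥ τ(n) then u_n(a) ≥ 0. -/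
/-- existence of a critical value `τ(n)` at which `u_n(a)` changes sign. -/
theorem u_sign_change (n : ℕ) (hn : 3 ≤ n) :
    ∃ τ : ℝ, 1 ≤ τ ∧ τ ≤ (n : ℝ) - 1 ∧
      ∀ a : ℕ, 1 ≤ a → a ≤ n - 1 →
        ((a : ℝ) ≤ τ → uDiff n a ≤ 0) ∧
        (τ ≤ (a : ℝ) → uDiff n a ≥ 0) := by
  have hN : (3 : ℝ) ≤ (n : ℝ) := by exact_mod_cast hn
  set s := Real.sqrt (8 * (n : ℝ) + 1) with hs
  have h8 : (0 : ℝ) ≤ 8 * (n : ℝ) + 1 := by nlinarith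
  have hs0 : 0 ≤ s := Real.sqrt_nonneg _
  have hssq : s ^ 2 = 8 * (n : ℝ) + 1 := Real.sq_sqrt h8
  have hs5 : (5 : ℝ) ≤ s := by
    have : (5 : ℝ) = Real.sqrt 25 := by
      rw [show (25 : ℝ) = 5 ^ 2 by norm_num, Real.sqrt_sq (by norm_num)]
    rw [this]
    exact Real.sqrt_le_sqrt (by nlinarith)
  have hsub : s ≤ 4 * (n : ℝ) - 3 := by
    have h1 : (8 * (n : ℝ) + 1) ≤ (4 * (n : ℝ) - 3) ^ 2 := by nlinarith
    calc s ≤ Real.sqrt ((4 * (n : ℝ) - 3) ^ 2) := Real.sqrt_le_sqrt h1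
      _ = 4 * (n : ℝ) - 3 := Real.sqrt_sq (by nlinarith)
  refine ⟨(s - 1) / 4, by linarith, by linarith, ?_⟩
  intro a ha1 ha2
  have hA1 : (1 : ℝ) ≤ (a : ℝ) := by exact_mod_cast ha1
  have hA2 : (a : ℝ) ≤ (n : ℝ) - 1 := by
    have : (a : ℝ) ≤ ((n - 1 : ℕ) : ℝ) := by exact_mod_cast ha2
    have h1 : ((n - 1 : ℕ) : ℝ) = (n : ℝ) - 1 := by
      have : 1 ≤ n := by omega
      push_cast [Nat.cast_sub this]
      ring
    linarith [h1 ▸ this]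
  have hd1 : (0 : ℝ) < (n : ℝ) * ((n : ℝ) - 1) := by nlinarith
  have hd2 : (0 : ℝ) < 2 * (n : ℝ) - 2 * (a : ℝ) - 1 := by linarith
  constructor
  · intro hle
    have hq : 2 * (a : ℝ) ^ 2 + (a : ℝ) - (n : ℝ) ≤ 0 := by
      have h41 : 4 * (a : ℝ) + 1 ≤ s := by linarith
      nlinarith
    rw [uDiff, sub_nonpos, div_le_div_iff₀ hd1 hd2]
    nlinarith [mul_nonneg (by linarith : (0:ℝ) ≤ (n : ℝ) - (a : ℝ) - 2 * (a:ℝ)^2) (by linarith : (0:ℝ) ≤ (n : ℝ) - 1 - (a : ℝ))]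
  · intro hge
    have hq : 0 ≤ 2 * (a : ℝ) ^ 2 + (a : ℝ) - (n : ℝ) := by
      have h41 : s ≤ 4 * (a : ℝ) + 1 := by linarith
      nlinarith
    rw [uDiff, ge_iff_le, sub_nonneg, div_le_div_iff₀ hd2 hd1]
    nlinarith [mul_nonneg hq (by linarith : (0:ℝ) ≤ (n : ℝ) - 1 - (a : ℝ))]
end

section
/- Let m, m', n, n' be positive integers with (m − m')(n − n') ≥ 0. Then φ(m'+n')·φ(m+n) ≥ φ(m+n')·φ(m'+n). -/
lemma phi_pos (m : ℕ) : 0 < phi m := by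
  unfold phi
  positivity

lemma phi_succ (j : ℕ) : phi (j + 2) = (2 * (j : ℝ) + 1) * phi (j + 1) := by
  unfold phi
  have h1 : 2 * (j + 2) - 2 = 2 * j + 2 := by omega
  have h2 : 2 * (j + 1) - 2 = 2 * j := by omega
  have h3 : j + 2 - 1 = j + 1 := by omega
  have h4 : j + 1 - 1 = j := by omega
  rw [h1, h2, h3, h4]
  rw [show (2*j+2) = (2*j+1)+1 by ring, Nat.factorial_succ, Nat.factorial_succ,
    Nat.factorial_succ, pow_succ]
  push_cast
  have : (Nat.factorial j : ℝ) ≠ 0 := Nat.cast_ne_zero.2 (Nat.factorial_ne_zero j)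
  field_simp
  ring

lemma phi_mono (a c : ℕ) (ha : 1 ≤ a) (hac : a ≤ c) :
    ∀ j : ℕ, phi (a + j) * phi c ≤ phi a * phi (c + j) := by
  intro j
  induction j with
  | zero => simp
  | succ k ih =>
    obtain ⟨a', rfl⟩ : ∃ a', a = a' + 1 := ⟨a - 1, by omega⟩
    obtain ⟨c', rfl⟩ : ∃ c', c = c' + 1 := ⟨c - 1, by omega⟩
    have e1 : a' + 1 + (k + 1) = (a' + k) + 2 := by ring
    have e2 : c' + 1 + (k + 1) = (c' + k) + 2 := by ring
    have e3 : a' + 1 + k = (a' + k) + 1 := by ring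
    have e4 : c' + 1 + k = (c' + k) + 1 := by ring
    rw [e1, e2, phi_succ, phi_succ]
    rw [e3, e4] at ih
    have hac' : a' ≤ c' := by omega
    have hco : (2 * ((a' + k : ℕ) : ℝ) + 1) ≤ (2 * ((c' + k : ℕ) : ℝ) + 1) := by
      have hx : ((a' + k : ℕ) : ℝ) ≤ ((c' + k : ℕ) : ℝ) := Nat.cast_le.2 (by omega)
      linarith
    have hpos1 : (0:ℝ) ≤ 2 * ((a' + k : ℕ) : ℝ) + 1 := by positivity
    have hnn : (0:ℝ) ≤ phi (a' + 1) * phi ((c' + k) + 1) :=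
      le_of_lt (mul_pos (phi_pos _) (phi_pos _))
    calc (2 * ((a' + k : ℕ) : ℝ) + 1) * phi ((a' + k) + 1) * phi (c' + 1)
        = (2 * ((a' + k : ℕ) : ℝ) + 1) * (phi ((a' + k) + 1) * phi (c' + 1)) := by ring
      _ ≤ (2 * ((a' + k : ℕ) : ℝ) + 1) * (phi (a' + 1) * phi ((c' + k) + 1)) := by
          exact mul_le_mul_of_nonneg_left ih hpos1
      _ ≤ (2 * ((c' + k : ℕ) : ℝ) + 1) * (phi (a' + 1) * phi ((c' + k) + 1)) := by
          exact mul_le_mul_of_nonneg_right hco hnn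
      _ = phi (a' + 1) * ((2 * ((c' + k : ℕ) : ℝ) + 1) * phi ((c' + k) + 1)) := by ring

/-- `phi(m'+n') phi(m+n) ≥ phi(m+n') phi(m'+n)` when `(m-m')(n-n') ≥ 0`. -/
theorem phi_rearrangement (m m' n n' : ℕ) (hm : 1 ≤ m) (hm' : 1 ≤ m')
    (hn : 1 ≤ n) (hn' : 1 ≤ n')
    (h : ((m : ℝ) - (m' : ℝ)) * ((n : ℝ) - (n' : ℝ)) ≥ 0) :
    phi (m' + n') * phi (m + n) ≥ phi (m + n') * phi (m' + n) := by
  rcases lt_trichotomy m' m with hlt | rfl | hlt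
  · have hnn : n' ≤ n := by
      by_contra hc
      push_neg at hc
      have h1 : (0:ℝ) < (m:ℝ) - m' := by
        have := Nat.cast_lt (α := ℝ) |>.2 hlt; linarith
      have h2 : (n:ℝ) - n' < 0 := by
        have := Nat.cast_lt (α := ℝ) |>.2 hc; linarith
      nlinarith
    have := phi_mono (m' + n') (m' + n) (by omega) (by omega) (m - m')
    have e1 : m' + n' + (m - m') = m + n' := by omega
    have e2 : m' + n + (m - m') = m + n := by omega
    rw [e1, e2] at this
    linarith
  · exact le_rfl
  · have hnn : n ≤ n' := by
      by_contra hc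
      push_neg at hc
      have h1 : (0:ℝ) < (m':ℝ) - m := by
        have := Nat.cast_lt (α := ℝ) |>.2 hlt; linarith
      have h2 : (0:ℝ) < (n:ℝ) - n' := by
        have := Nat.cast_lt (α := ℝ) |>.2 hc; linarith
      nlinarith
    have := phi_mono (m + n) (m + n') (by omega) (by omega) (m' - m)
    have e1 : m + n + (m' - m) = m' + n := by omega
    have e2 : m + n' + (m' - m) = m' + n' := by omega
    rw [e1, e2] at this
    linarith
end

section
/- Let n, a, b be positive integers. (i) If a + b ≤ n, then φ(a)φ(b)φ(n−a−b+2)/φ(n) ≥ (φ(a)φ(n−a+1)/φ(n))·(φ(b)φ(n−b+1)/φ(n)). (ii) If a ≤ b ≤ n, then φ(a)φ(n−b+1)φ(b−a+1)/φ(n) ≥ (φ(a)φ(n−a+1)/φ(n))·(φ(b)φ(n−b+1)/φ(n)). (Consequently, under the PDA model the indicator random variables of two compatible subsets A, B of the leaf set being clades are positively correlated: P_PDA(A,B) ≥ P_PDA(A)·P_PDA(B).) -/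
lemma phi_succ_succ (k : ℕ) : phi (k + 2) = (2 * (k : ℝ) + 1) * phi (k + 1) := by
  unfold phi
  have h1 : 2 * (k + 2) - 2 = (2 * k + 1) + 1 := by omega
  have h2 : 2 * (k + 1) - 2 = 2 * k := by omega
  have h3 : k + 2 - 1 = k + 1 := by omega
  have h4 : k + 1 - 1 = k := by omega
  rw [h1, h2, h3, h4, Nat.factorial_succ (2 * k + 1), Nat.factorial_succ (2 * k),
    Nat.factorial_succ k, pow_succ]
  have hf : (0:ℝ) < (Nat.factorial k : ℝ) := by positivity
  have hp : (0:ℝ) < (2:ℝ) ^ k := by positivity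
  push_cast
  field_simp
  ring

lemma phi_step (t m : ℕ) : phi (t + 2) * phi (t + m + 1) ≤ phi (t + 1) * phi (t + m + 2) := by
  rw [phi_succ_succ t, show t + m + 2 = (t + m) + 2 from rfl, phi_succ_succ (t + m)]
  have h1 := phi_pos (t + 1)
  have h2 := phi_pos (t + m + 1)
  have hm : (0:ℝ) ≤ (m : ℝ) := Nat.cast_nonneg m
  push_cast
  nlinarith [mul_nonneg (mul_nonneg hm h1.le) h2.le]

lemma phi_lc : ∀ d e s : ℕ, d ≤ e →
    phi (s + 1 + d) * phi (s + 1 + e) ≤ phi (s + 1) * phi (s + 1 + d + e) := by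
  intro d
  induction d with
  | zero => intro e s _; simp
  | succ d ih =>
    intro e s hde
    obtain ⟨e', rfl⟩ : ∃ e', e = e' + 1 := ⟨e - 1, by omega⟩
    have hde' : d ≤ e' := by omega
    have IH := ih e' (s + 1) hde'
    have ST := phi_step s (d + e' + 1)
    calc phi (s + 1 + (d + 1)) * phi (s + 1 + (e' + 1))
        = phi (s + 1 + 1 + d) * phi (s + 1 + 1 + e') := by ring_nf
      _ ≤ phi (s + 1 + 1) * phi (s + 1 + 1 + d + e') := IH
      _ = phi (s + 2) * phi (s + (d + e' + 1) + 1) := by ring_nf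
      _ ≤ phi (s + 1) * phi (s + (d + e' + 1) + 2) := ST
      _ = phi (s + 1) * phi (s + 1 + (d + 1) + (e' + 1)) := by ring_nf

lemma phi_M (s d e : ℕ) :
    phi (s + 1 + d) * phi (s + 1 + e) ≤ phi (s + 1) * phi (s + 1 + d + e) := by
  rcases le_total d e with h | h
  · exact phi_lc d e s h
  · have := phi_lc e d s h
    rw [show s + 1 + e + d = s + 1 + d + e from by omega] at this
    linarith [this, mul_comm (phi (s + 1 + d)) (phi (s + 1 + e))]

/-- positive correlation of compatible clades under the PDA model,
expressed via `phi`: the disjoint case (i) and the nested case (ii). -/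
theorem pda_clade_positive_correlation (n a b : ℕ) (hn : 1 ≤ n) (ha : 1 ≤ a) (hb : 1 ≤ b) :
    (a + b ≤ n →
      phi a * phi b * phi (n - a - b + 2) / phi n ≥
        (phi a * phi (n - a + 1) / phi n) * (phi b * phi (n - b + 1) / phi n)) ∧
    (a ≤ b → b ≤ n →
      phi a * phi (n - b + 1) * phi (b - a + 1) / phi n ≥
        (phi a * phi (n - a + 1) / phi n) * (phi b * phi (n - b + 1) / phi n)) := by
  have hpn := phi_pos n
  have hpa := phi_pos a
  have hpb := phi_pos b
  constructor
  · intro hab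
    have key : phi (n - a + 1) * phi (n - b + 1) ≤ phi (n - a - b + 2) * phi n := by
      have H := phi_M (n - a - b + 1) (b - 1) (a - 1)
      have e1 : n - a - b + 1 + 1 + (b - 1) = n - a + 1 := by omega
      have e2 : n - a - b + 1 + 1 + (a - 1) = n - b + 1 := by omega
      have e3 : n - a - b + 1 + 1 = n - a - b + 2 := by omega
      have e4 : n - a - b + 1 + 1 + (b - 1) + (a - 1) = n := by omega
      rw [e4, e1, e2, e3] at H
      exact H
    rw [ge_iff_le, div_mul_div_comm, div_le_div_iff₀ (by positivity) hpn]
    nlinarith [mul_le_mul_of_nonneg_left key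
      (by positivity : (0:ℝ) ≤ phi a * phi b * phi n)]
  · intro hab hbn
    have key : phi (n - a + 1) * phi b ≤ phi (b - a + 1) * phi n := by
      have H := phi_M (b - a) (n - b) (a - 1)
      have e1 : b - a + 1 + (n - b) = n - a + 1 := by omega
      have e2 : b - a + 1 + (a - 1) = b := by omega
      have e4 : b - a + 1 + (n - b) + (a - 1) = n := by omega
      rw [e4, e1, e2] at H
      exact H
    have hpy := phi_pos (n - b + 1)
    rw [ge_iff_le, div_mul_div_comm, div_le_div_iff₀ (by positivity) hpn]
    nlinarith [mul_le_mul_of_nonneg_left key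
      (by positivity : (0:ℝ) ≤ phi a * phi (n - b + 1) * phi n)]
end

section
/- For every integer n ≥ 3: (i) p*_n(a) = p*_n(n−a) for every integer 1 ≤ a ≤ n−1; and (ii) for every integer a with 2 ≤ a ≤ n−2, p*_n(a−1)·p*_n(a+1) ≥ p*_n(a)², i.e. the sequence {p*_n(a)}_{1 ≤ a ≤ n−1} of clan probabilities under the YHK model is log-convex. -/
set_option maxRecDepth 40000
set_option linter.all false


set_option maxHeartbeats 2000000 in
private lemma yhk_aux (x y c c1 c2 : ℝ) (hx : 2 ≤ x) (hy : 2 ≤ y) (hc : 0 < c)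
    (h1 : c1 * (y + 1) = c * x) (h2 : c2 * (x + 1) = c * y) :
    0 ≤ (2 * (x + y) * (1 / ((x - 1) * x) + 1 / ((y + 1) * (y + 2)) -
            1 / ((x + y) * (x + y - 1))) * c1⁻¹) *
        (2 * (x + y) * (1 / ((x + 1) * (x + 2)) + 1 / ((y - 1) * y) -
            1 / ((x + y) * (x + y - 1))) * c2⁻¹) -
        (2 * (x + y) * (1 / (x * (x + 1)) + 1 / (y * (y + 1)) -
            1 / ((x + y) * (x + y - 1))) * c⁻¹) ^ 2 := by
  have hx1 : (0:ℝ) < x - 1 := by linarith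
  have hy1 : (0:ℝ) < y - 1 := by linarith
  have hx0 : (0:ℝ) < x := by linarith
  have hy0 : (0:ℝ) < y := by linarith
  have hc1 : (0:ℝ) < c1 := by nlinarith
  have hc2 : (0:ℝ) < c2 := by nlinarith
  have e1 : c1 = c * x / (y + 1) := by
    rw [eq_div_iff (by linarith : (y + 1 : ℝ) ≠ 0)]; exact h1
  have e2 : c2 = c * y / (x + 1) := by
    rw [eq_div_iff (by linarith : (x + 1 : ℝ) ≠ 0)]; exact h2
  have key : (2 * (x + y) * (1 / ((x - 1) * x) + 1 / ((y + 1) * (y + 2)) -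
            1 / ((x + y) * (x + y - 1))) * c1⁻¹) *
        (2 * (x + y) * (1 / ((x + 1) * (x + 2)) + 1 / ((y - 1) * y) -
            1 / ((x + y) * (x + y - 1))) * c2⁻¹) -
        (2 * (x + y) * (1 / (x * (x + 1)) + 1 / (y * (y + 1)) -
            1 / ((x + y) * (x + y - 1))) * c⁻¹) ^ 2 =
      4 * (x + y) ^ 2 * (-2*y^3 - 5*y^4 + 8*y^5 + 13*y^6 - 10*y^7 - 11*y^8 + 4*y^9 + 3*y^10 + 4*x^1*y^1 - 38*x^1*y^3 + 18*x^1*y^4 + 59*x^1*y^5 - 39*x^1*y^6 - 40*x^1*y^7 + 20*x^1*y^8 + 15*x^1*y^9 + 1*x^1*y^10 - 53*x^2*y^2 + 42*x^2*y^3 + 65*x^2*y^4 - 49*x^2*y^5 - 5*x^2*y^6 + 58*x^2*y^7 + 33*x^2*y^8 + 5*x^2*y^9 - 2*x^3 - 38*x^3*y^1 + 42*x^3*y^2 + 53*x^3*y^3 + 17*x^3*y^4 + 119*x^3*y^5 + 157*x^3*y^6 + 66*x^3*y^7 + 10*x^3*y^8 - 5*x^4 + 18*x^4*y^1 + 65*x^4*y^2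 + 17*x^4*y^3 + 197*x^4*y^4 + 303*x^4*y^5 + 123*x^4*y^6 + 14*x^4*y^7 + 8*x^5 + 59*x^5*y^1 - 49*x^5*y^2 + 119*x^5*y^3 + 303*x^5*y^4 + 157*x^5*y^5 + 19*x^5*y^6 + 13*x^6 - 39*x^6*y^1 - 5*x^6*y^2 + 157*x^6*y^3 + 123*x^6*y^4 + 19*x^6*y^5 - 10*x^7 - 40*x^7*y^1 + 58*x^7*y^2 + 66*x^7*y^3 + 14*x^7*y^4 - 11*x^8 + 20*x^8*y^1 + 33*x^8*y^2 + 10*x^8*y^3 + 4*x^9 + 15*x^9*y^1 + 5*x^9*y^2 + 3*x^10 + 1*x^10*y^1)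
        / (c ^ 2 * x * y * ((x - 1) * x * (x + 1) ^ 2 * (x + 2) * (y - 1) * y * (y + 1) ^ 2
            * (y + 2) * (x + y) ^ 2 * (x + y - 1) ^ 2)) := by
    rw [e1, e2]
    have d1 : (x - 1 : ℝ) ≠ 0 := ne_of_gt hx1
    have d2 : (x : ℝ) ≠ 0 := ne_of_gt hx0
    have d3 : (x + 1 : ℝ) ≠ 0 := by linarith
    have d4 : (x + 2 : ℝ) ≠ 0 := by linarith
    have f1 : (y - 1 : ℝ) ≠ 0 := ne_of_gt hy1
    have f2 : (y : ℝ) ≠ 0 := ne_of_gt hy0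
    have f3 : (y + 1 : ℝ) ≠ 0 := by linarith
    have f4 : (y + 2 : ℝ) ≠ 0 := by linarith
    have g1 : (x + y : ℝ) ≠ 0 := by linarith
    have g2 : (x + y - 1 : ℝ) ≠ 0 := by linarith
    have hcne : c ≠ 0 := ne_of_gt hc
    field_simp
    ring
  rw [key]
  apply div_nonneg
  · obtain ⟨u, hu⟩ : ∃ u : ℝ, u ^ 2 = x - 2 :=
      ⟨Real.sqrt (x - 2), Real.sq_sqrt (by linarith)⟩
    obtain ⟨v, hv⟩ : ∃ v : ℝ, v ^ 2 = y - 2 :=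
      ⟨Real.sqrt (y - 2), Real.sq_sqrt (by linarith)⟩
    have hxu : x = u ^ 2 + 2 := by linarith
    have hyv : y = v ^ 2 + 2 := by linarith
    have : 4 * (x + y) ^ 2 * (-2*y^3 - 5*y^4 + 8*y^5 + 13*y^6 - 10*y^7 - 11*y^8 + 4*y^9 + 3*y^10 + 4*x^1*y^1 - 38*x^1*y^3 + 18*x^1*y^4 + 59*x^1*y^5 - 39*x^1*y^6 - 40*x^1*y^7 + 20*x^1*y^8 + 15*x^1*y^9 + 1*x^1*y^10 - 53*x^2*y^2 + 42*x^2*y^3 + 65*x^2*y^4 - 49*x^2*y^5 - 5*x^2*y^6 + 58*x^2*y^7 + 33*x^2*y^8 + 5*x^2*y^9 - 2*x^3 - 38*x^3*y^1 + 42*x^3*y^2 + 53*x^3*y^3 + 17*x^3*y^4 + 119*x^3*y^5 + 157*x^3*y^6 + 66*x^3*y^7 + 10*x^3*y^8 - 5*x^4 + 18*x^4*y^1 + 65*x^4*y^2 + 17*x^4*y^3 + 197*x^4*y^4 + 303*x^4*y^5 + 123*x^4*y^6 + 14*x^4*y^7 + 8*x^5 + 59*x^5*y^1 - 49*x^5*y^2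 + 119*x^5*y^3 + 303*x^5*y^4 + 157*x^5*y^5 + 19*x^5*y^6 + 13*x^6 - 39*x^6*y^1 - 5*x^6*y^2 + 157*x^6*y^3 + 123*x^6*y^4 + 19*x^6*y^5 - 10*x^7 - 40*x^7*y^1 + 58*x^7*y^2 + 66*x^7*y^3 + 14*x^7*y^4 - 11*x^8 + 20*x^8*y^1 + 33*x^8*y^2 + 10*x^8*y^3 + 4*x^9 + 15*x^9*y^1 + 5*x^9*y^2 + 3*x^10 + 1*x^10*y^1) =
        4 * (u ^ 2 + v ^ 2 + 4) ^ 2 * (1492992 + 3595104*v^2 + 3918096*v^4 + 2587098*v^6 + 1172627*v^8 + 389182*v^10 + 96343*v^12 + 17326*v^14 + 2113*v^16 + 154*v^18 + 5*v^20 + 3595104*u^2 + 7812756*u^2*v^2 + 7560984*u^2*v^4 + 4313718*u^2*v^6 + 1629884*u^2*v^8 + 435335*u^2*v^10 + 84673*u^2*v^12 + 11784*u^2*v^14 + 1082*u^2*v^16 + 55*u^2*v^18 + 1*u^2*v^20 + 3918096*u^4 + 7560984*u^4*v^2 + 6436039*u^4*v^4 + 3158400*u^4*v^6 + 988693*u^4*v^8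 + 208069*u^4*v^10 + 30245*u^4*v^12 + 2998*u^4*v^14 + 183*u^4*v^16 + 5*u^4*v^18 + 2587098*u^6 + 4313718*u^6*v^2 + 3158400*u^6*v^4 + 1311093*u^6*v^6 + 334963*u^6*v^8 + 54107*u^6*v^10 + 5513*u^6*v^12 + 338*u^6*v^14 + 10*u^6*v^16 + 1172627*u^8 + 1629884*u^8*v^2 + 988693*u^8*v^4 + 334963*u^8*v^6 + 67357*u^8*v^8 + 7945*u^8*v^10 + 509*u^8*v^12 + 14*u^8*v^14 + 389182*u^10 + 435335*u^10*v^2 + 208069*u^10*v^4 + 54107*u^10*v^6 + 7945*u^10*v^8 + 613*u^10*v^10 + 19*u^10*v^12 + 96343*u^12 + 84673*u^12*v^2 + 30245*u^12*v^4 + 5513*u^12*v^6 + 509*u^12*v^8 + 19*u^12*v^10 + 17326*u^14 + 11784*u^14*v^2 + 2998*u^14*v^4 + 338*u^14*v^6 + 14*u^14*v^8 + 2113*u^16 + 1082*u^16*v^2 + 183*u^16*v^4 + 10*u^16*v^6 + 154*u^18 + 55*u^18*v^2 + 5*u^18*v^4 + 5*u^20 + 1*u^20*v^2) := by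
      rw [hxu, hyv]; ring
    rw [this]
    positivity
  · apply le_of_lt
    apply_rules [mul_pos, pow_pos] <;> linarith

set_option maxHeartbeats 4000000 in
/-- symmetry and log-convexity of the clan probabilities `p*_n(a)` under
the YHK model. -/
theorem yhk_clan_symm_log_convex (n : ℕ) (hn : 3 ≤ n) :
    (∀ a : ℕ, 1 ≤ a → a ≤ n - 1 → pStar n a = pStar n (n - a)) ∧
    (∀ a : ℕ, 2 ≤ a → a ≤ n - 2 →
      pStar n (a - 1) * pStar n (a + 1) ≥ (pStar n a) ^ 2) := by
  constructor
  · intro a _ han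
    have haN : a ≤ n := by omega
    rw [pStar, pStar, Nat.choose_symm haN, Nat.cast_sub haN]
    ring
  · intro a ha2 han
    have haN : a ≤ n := by omega
    have hc : (0:ℝ) < (n.choose a : ℝ) := by exact_mod_cast Nat.choose_pos haN
    have hxR : (2:ℝ) ≤ (a:ℝ) := by exact_mod_cast ha2
    have hyR : (2:ℝ) ≤ (n:ℝ) - (a:ℝ) := by
      have : ((a:ℝ) + 2) ≤ (n:ℝ) := by exact_mod_cast (show a + 2 ≤ n by omega)
      linarith
    have hAm : ((a - 1 : ℕ) : ℝ) = (a:ℝ) - 1 := by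
      rw [Nat.cast_sub (by omega : 1 ≤ a)]; norm_num
    have k1 : n.choose a * a = n.choose (a - 1) * (n - a + 1) := by
      have h := Nat.choose_succ_right_eq n (a - 1)
      rw [show a - 1 + 1 = a by omega] at h
      rw [h, show n - (a - 1) = n - a + 1 by omega]
    have k2 : n.choose (a + 1) * (a + 1) = n.choose a * (n - a) :=
      Nat.choose_succ_right_eq n a
    have hsub : ((n - a : ℕ) : ℝ) = (n:ℝ) - (a:ℝ) := Nat.cast_sub haN
    have h1 : ((n.choose (a - 1) : ℕ) : ℝ) * (((n:ℝ) - (a:ℝ)) + 1)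
        = (n.choose a : ℝ) * (a:ℝ) := by
      have h : ((n.choose a : ℕ) : ℝ) * ((a:ℕ):ℝ)
          = ((n.choose (a - 1) : ℕ) : ℝ) * (((n - a + 1 : ℕ)) : ℝ) := by
        exact_mod_cast k1
      rw [show (((n - a + 1 : ℕ)) : ℝ) = ((n:ℝ) - (a:ℝ)) + 1 by push_cast [hsub]; ring]
        at h
      linarith [h]
    have h2 : ((n.choose (a + 1) : ℕ) : ℝ) * ((a:ℝ) + 1)
        = (n.choose a : ℝ) * ((n:ℝ) - (a:ℝ)) := by
      have h : ((n.choose (a + 1) : ℕ) : ℝ) * (((a + 1 : ℕ)) : ℝ)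
          = ((n.choose a : ℕ) : ℝ) * (((n - a : ℕ)) : ℝ) := by exact_mod_cast k2
      rw [hsub] at h
      push_cast at h
      linarith [h]
    have main := yhk_aux ((a:ℝ)) ((n:ℝ) - (a:ℝ)) ((n.choose a : ℕ):ℝ)
      ((n.choose (a - 1) : ℕ):ℝ) ((n.choose (a + 1) : ℕ):ℝ) hxR hyR hc h1 h2
    have P1 : pStar n (a - 1) = 2 * ((a:ℝ) + ((n:ℝ) - (a:ℝ)))
        * (1 / (((a:ℝ) - 1) * (a:ℝ)) + 1 / ((((n:ℝ) - (a:ℝ)) + 1) * (((n:ℝ) - (a:ℝ)) + 2))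
          - 1 / (((a:ℝ) + ((n:ℝ) - (a:ℝ))) * ((a:ℝ) + ((n:ℝ) - (a:ℝ)) - 1)))
        * ((n.choose (a - 1) : ℕ):ℝ)⁻¹ := by
      rw [pStar, hAm]; ring_nf
    have P2 : pStar n (a + 1) = 2 * ((a:ℝ) + ((n:ℝ) - (a:ℝ)))
        * (1 / (((a:ℝ) + 1) * ((a:ℝ) + 2)) + 1 / ((((n:ℝ) - (a:ℝ)) - 1) * ((n:ℝ) - (a:ℝ)))
          - 1 / (((a:ℝ) + ((n:ℝ) - (a:ℝ))) * ((a:ℝ) + ((n:ℝ) - (a:ℝ)) - 1)))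
        * ((n.choose (a + 1) : ℕ):ℝ)⁻¹ := by
      rw [pStar]; push_cast; ring_nf
    have P0 : pStar n a = 2 * ((a:ℝ) + ((n:ℝ) - (a:ℝ)))
        * (1 / ((a:ℝ) * ((a:ℝ) + 1)) + 1 / (((n:ℝ) - (a:ℝ)) * (((n:ℝ) - (a:ℝ)) + 1))
          - 1 / (((a:ℝ) + ((n:ℝ) - (a:ℝ))) * ((a:ℝ) + ((n:ℝ) - (a:ℝ)) - 1)))
        * ((n.choose a : ℕ):ℝ)⁻¹ := by
      rw [pStar]; ring_nf
    rw [ge_iff_le, ← sub_nonneg, P1, P2, P0]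
    exact main
end
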